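/- arXiv:1107.3238 — 2 statements merged into one kernel-verified Lean document; each statement's English description precedes it below -/
import Mathlib

section
/- Let (X₀,X₁) be a positive C-Calderón couple of Banach lattices of measurable functions on a common measure space (Ω,Σ,μ), for some constant C > 0, and suppose that X₀ and X₁ are both complete lattices. Then for every p ∈ (1,∞), the couple of p-convexifications (X₀^(p), X₁^(p)) is a 2^{1−1/p} C^{1/p}-Calderón couple; that is, whenever f,g ∈ X₀^(p)+X₁^(p) satisfy K(t,g;X₀^(p),X₁^(p)) ≤ K(t,f;X₀^(p),X₁^(p)) for all t>0, there exists a bounded linear operator L:(X₀^(p),X₁^(p))→(X₀^(p),X₁^(p)) with Lf = g and ‖L‖_{Xⱼ^(p)→Xⱼ^(p)} ≤ 2^{1−1/p} C^{1/p} for j=0,1. -/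
open MeasureTheory

/-- A Banach lattice of (a.e.-equivalence classes of) real-valued measurable
functions on a measure space `(Ω, μ)`: a linear subspace of `Ω →ₘ[μ] ℝ` with a complete
norm satisfying the lattice (ideal) property. -/
structure BanachFunctionLattice (Ω : Type*) [MeasurableSpace Ω] (μ : MeasureTheory.Measure Ω) where
  carrier : Set (Ω →ₘ[μ] ℝ)
  norm : (Ω →ₘ[μ] ℝ) → ℝ
  zero_mem : 0 ∈ carrier
  add_mem : ∀ {f g}, f ∈ carrier → g ∈ carrier → f + g ∈ carrier
  smul_mem : ∀ (c : ℝ) {f}, f ∈ carrier → c • f ∈ carrier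
  norm_nonneg : ∀ f ∈ carrier, 0 ≤ norm f
  norm_eq_zero_iff : ∀ f ∈ carrier, (norm f = 0 ↔ f = 0)
  norm_add_le : ∀ f ∈ carrier, ∀ g ∈ carrier, norm (f + g) ≤ norm f + norm g
  norm_smul : ∀ (c : ℝ), ∀ f ∈ carrier, norm (c • f) = |c| * norm f
  ideal_mem : ∀ f ∈ carrier, ∀ g : (Ω →ₘ[μ] ℝ), |g| ≤ |f| → g ∈ carrier
  ideal_norm_le : ∀ f ∈ carrier, ∀ g : (Ω →ₘ[μ] ℝ), |g| ≤ |f| → norm g ≤ norm f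
  complete : ∀ u : ℕ → (Ω →ₘ[μ] ℝ), (∀ n, u n ∈ carrier) →
    (∀ ε > 0, ∃ N, ∀ m ≥ N, ∀ n ≥ N, norm (u m - u n) < ε) →
    ∃ f ∈ carrier, ∀ ε > 0, ∃ N, ∀ n ≥ N, norm (u n - f) < ε

variable {Ω : Type*} [MeasurableSpace Ω] {μ : MeasureTheory.Measure Ω}

/-- The a.e.-equivalence class of `ω ↦ |f ω| ^ p` (real power). -/
noncomputable def absRpow (p : ℝ) (f : Ω →ₘ[μ] ℝ) : Ω →ₘ[μ] ℝ :=
  AEEqFun.mk (fun ω => |f ω| ^ p)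
    (((by measurability : Measurable fun x : ℝ => |x| ^ p).comp_aemeasurable
      f.aemeasurable).aestronglyMeasurable)

/-- A (not necessarily complete) normed function space: the data of a carrier and a norm.
Used to speak about `p`-convexifications without re-proving all the axioms. -/
structure FunctionSpace (Ω : Type*) [MeasurableSpace Ω] (μ : MeasureTheory.Measure Ω) where
  carrier : Set (Ω →ₘ[μ] ℝ)
  norm : (Ω →ₘ[μ] ℝ) → ℝ

/-- The carrier-and-norm data underlying a Banach function lattice. -/
def BanachFunctionLattice.toFunctionSpace (X : BanachFunctionLattice Ω μ) :
    FunctionSpace Ω μ := ⟨X.carrier, X.norm⟩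

/-- The `p`-convexification `X^(p)`: all `f` with `|f|^p ∈ X`, with norm `‖|f|^p‖_X^(1/p)`. -/
noncomputable def pConv (X : BanachFunctionLattice Ω μ) (p : ℝ) : FunctionSpace Ω μ where
  carrier := {f | absRpow p f ∈ X.carrier}
  norm := fun f => (X.norm (absRpow p f)) ^ (1 / p)

/-- The sum space `X₀ + X₁` (as a set). -/
def sumSet (A₀ A₁ : FunctionSpace Ω μ) : Set (Ω →ₘ[μ] ℝ) :=
  {f | ∃ a₀ ∈ A₀.carrier, ∃ a₁ ∈ A₁.carrier, f = a₀ + a₁}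

/-- The Peetre `K`-functional `K(t, f; A₀, A₁)`. -/
noncomputable def Kfun (A₀ A₁ : FunctionSpace Ω μ) (t : ℝ) (f : Ω →ₘ[μ] ℝ) : ℝ :=
  sInf {r | ∃ a₀ ∈ A₀.carrier, ∃ a₁ ∈ A₁.carrier,
    f = a₀ + a₁ ∧ r = A₀.norm a₀ + t * A₁.norm a₁}

/-- The norm of the sum space `X₀ + X₁`, namely `K(1, ·)`. -/
noncomputable def sumNorm (A₀ A₁ : FunctionSpace Ω μ) (f : Ω →ₘ[μ] ℝ) : ℝ :=
  Kfun A₀ A₁ 1 f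

/-- The functional `D(t, f; A₀, A₁)`, the analogue of the `K`-functional restricted to
disjointly supported decompositions. -/
noncomputable def Dfun (A₀ A₁ : FunctionSpace Ω μ) (t : ℝ) (f : Ω →ₘ[μ] ℝ) : ℝ :=
  sInf {r | ∃ a₀ ∈ A₀.carrier, ∃ a₁ ∈ A₁.carrier,
    f = a₀ + a₁ ∧ a₀ * a₁ = 0 ∧ r = A₀.norm a₀ + t * A₁.norm a₁}

/-- `T : (A₀, A₁) → (A₀, A₁)` is a bounded linear operator: `T` is linear on `A₀ + A₁`
and its restriction to each `Aⱼ` is a bounded operator from `Aⱼ` into itself. -/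
def IsBoundedCoupleOperator (A₀ A₁ : FunctionSpace Ω μ) (T : (Ω →ₘ[μ] ℝ) → (Ω →ₘ[μ] ℝ)) :
    Prop :=
  (∀ f ∈ sumSet A₀ A₁, ∀ g ∈ sumSet A₀ A₁, T (f + g) = T f + T g) ∧
  (∀ (c : ℝ), ∀ f ∈ sumSet A₀ A₁, T (c • f) = c • T f) ∧
  (∀ f ∈ A₀.carrier, T f ∈ A₀.carrier) ∧
  (∀ f ∈ A₁.carrier, T f ∈ A₁.carrier) ∧
  (∃ C₀ : ℝ, ∀ f ∈ A₀.carrier, A₀.norm (T f) ≤ C₀ * A₀.norm f) ∧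
  (∃ C₁ : ℝ, ∀ f ∈ A₁.carrier, A₁.norm (T f) ≤ C₁ * A₁.norm f)

/-- `‖T‖_{Aⱼ → Aⱼ} ≤ C` for `j = 0, 1`. -/
def CoupleOperatorNormLE (A₀ A₁ : FunctionSpace Ω μ) (T : (Ω →ₘ[μ] ℝ) → (Ω →ₘ[μ] ℝ))
    (C : ℝ) : Prop :=
  (∀ f ∈ A₀.carrier, A₀.norm (T f) ≤ C * A₀.norm f) ∧
  (∀ f ∈ A₁.carrier, A₁.norm (T f) ≤ C * A₁.norm f)

/-- `T` is a positive operator on `A₀ + A₁`. -/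
def IsPositiveOn (A₀ A₁ : FunctionSpace Ω μ) (T : (Ω →ₘ[μ] ℝ) → (Ω →ₘ[μ] ℝ)) : Prop :=
  ∀ h ∈ sumSet A₀ A₁, 0 ≤ h → 0 ≤ T h

/-- `(A₀, A₁)` is a Calderón couple. -/
def IsCalderonCouple (A₀ A₁ : FunctionSpace Ω μ) : Prop :=
  ∀ f ∈ sumSet A₀ A₁, ∀ g ∈ sumSet A₀ A₁,
    (∀ t > 0, Kfun A₀ A₁ t g ≤ Kfun A₀ A₁ t f) →
    ∃ T, IsBoundedCoupleOperator A₀ A₁ T ∧ T f = g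

/-- `(A₀, A₁)` is a `C`-Calderón couple. -/
def IsCCalderonCouple (A₀ A₁ : FunctionSpace Ω μ) (C : ℝ) : Prop :=
  ∀ f ∈ sumSet A₀ A₁, ∀ g ∈ sumSet A₀ A₁,
    (∀ t > 0, Kfun A₀ A₁ t g ≤ Kfun A₀ A₁ t f) →
    ∃ T, IsBoundedCoupleOperator A₀ A₁ T ∧ T f = g ∧ CoupleOperatorNormLE A₀ A₁ T C

/-- `(A₀, A₁)` is a positive Calderón couple. -/
def IsPositiveCalderonCouple (A₀ A₁ : FunctionSpace Ω μ) : Prop :=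
  ∀ f ∈ sumSet A₀ A₁, ∀ g ∈ sumSet A₀ A₁, 0 ≤ f → 0 ≤ g →
    (∀ t > 0, Kfun A₀ A₁ t g ≤ Kfun A₀ A₁ t f) →
    ∃ T, IsBoundedCoupleOperator A₀ A₁ T ∧ IsPositiveOn A₀ A₁ T ∧ T f = g

/-- `(A₀, A₁)` is a positive `C`-Calderón couple. -/
def IsPositiveCCalderonCouple (A₀ A₁ : FunctionSpace Ω μ) (C : ℝ) : Prop :=
  ∀ f ∈ sumSet A₀ A₁, ∀ g ∈ sumSet A₀ A₁, 0 ≤ f → 0 ≤ g →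
    (∀ t > 0, Kfun A₀ A₁ t g ≤ Kfun A₀ A₁ t f) →
    ∃ T, IsBoundedCoupleOperator A₀ A₁ T ∧ IsPositiveOn A₀ A₁ T ∧ T f = g ∧
      CoupleOperatorNormLE A₀ A₁ T C

/-- A set `S` of (classes of) measurable functions has the Least Upper Bound Property:
every nonempty subset of `S` bounded above by an element of `S` has a least upper bound
in `S` (for the a.e. pointwise order). -/
def HasLUBP (S : Set (Ω →ₘ[μ] ℝ)) : Prop :=
  ∀ A ⊆ S, A.Nonempty → (∃ b ∈ S, ∀ a ∈ A, a ≤ b) →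
    ∃ y ∈ S, (∀ a ∈ A, a ≤ y) ∧ ∀ z ∈ S, (∀ a ∈ A, a ≤ z) → y ≤ z

/-!
Put `F = 2^(p-1) |f|^p` and `G = |g|^p`. Splitting decompositions pointwise with the convexity
of `x ↦ x^p` gives `K(t, G) ≤ K(t^(1/p), g; X^(p))^p ≤ K(t^(1/p), f; X^(p))^p ≤ K(t, F)`, so the
positive Calderón property yields a positive `S` with `S F = G` and norm at most `C`. The
operator `L h = sgn(g) |g|^(1-p) · S(2^(p-1) sgn(f) |f|^(p-1) h)` then sends `f` to `g`, and
Hölder's inequality for the positive operator `S` (obtained from Young's inequality at countably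
many parameters) gives `|L h|^p ≤ 2^(p-1) S |h|^p`, hence `‖L‖ ≤ (2^(p-1) C)^(1/p)`.
-/

open Filter Set

theorem add_rpow_le_weighted {p θ x y : ℝ} (hp : 1 ≤ p) (hθ₀ : 0 < θ) (hθ₁ : θ < 1)
    (hx : 0 ≤ x) (hy : 0 ≤ y) :
    (x + y) ^ p ≤ θ ^ (1 - p) * x ^ p + (1 - θ) ^ (1 - p) * y ^ p := by
  have hθ' : 0 < 1 - θ := by linarith
  have h := (convexOn_rpow hp).2 (mem_Ici.2 (div_nonneg hx hθ₀.le))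
    (mem_Ici.2 (div_nonneg hy hθ'.le)) hθ₀.le hθ'.le (by ring)
  have e₀ : θ * (x / θ) + (1 - θ) * (y / (1 - θ)) = x + y := by field_simp
  have e₁ : ∀ {z w : ℝ}, 0 < w → 0 ≤ z → w * (z / w) ^ p = w ^ (1 - p) * z ^ p := by
    intro z w hw hz
    rw [Real.div_rpow hz hw.le, Real.rpow_sub hw, Real.rpow_one]; ring
  simpa only [smul_eq_mul, e₀, e₁ hθ₀ hx, e₁ hθ' hy] using h

theorem add_rpow_le_two_rpow_mul {p x y : ℝ} (hp : 1 ≤ p) (hx : 0 ≤ x) (hy : 0 ≤ y) :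
    (x + y) ^ p ≤ 2 ^ (p - 1) * (x ^ p + y ^ p) := by
  have h := add_rpow_le_weighted hp (θ := 1 / 2) (by norm_num) (by norm_num) hx hy
  have e : ((1 : ℝ) / 2) ^ (1 - p) = 2 ^ (p - 1) := by
    rw [one_div, Real.inv_rpow zero_le_two, ← Real.rpow_neg zero_le_two, neg_sub]
  rw [show (1 : ℝ) - 1 / 2 = 1 / 2 by norm_num, e] at h
  linarith

theorem le_of_forall_pos_le_of_continuousAt {F : ℝ → ℝ} {c : ℝ} (hF : ContinuousAt F 0)
    (h : ∀ ε > 0, c ≤ F ε) : c ≤ F 0 :=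
  ge_of_tendsto (hF.tendsto.mono_left (nhdsWithin_le_nhds (s := Ioi 0)))
    (eventually_nhdsWithin_of_forall h)

/-- The bound of `add_rpow_le_weighted` is sharp: take `θ` close to `x / (x + y)`. -/
theorem le_add_rpow_of_forall_weighted {p c x y : ℝ} (hp : 1 ≤ p) (hx : 0 ≤ x) (hy : 0 ≤ y)
    (h : ∀ θ ∈ Ioo (0 : ℝ) 1, c ≤ θ ^ (1 - p) * x ^ p + (1 - θ) ^ (1 - p) * y ^ p) :
    c ≤ (x + y) ^ p := by
  have hcont : ContinuousAt (fun ε : ℝ => (x + y + 2 * ε) ^ p) 0 :=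
    (Real.continuousAt_rpow_const _ _ (Or.inr (by linarith))).comp (by fun_prop)
  simpa using le_of_forall_pos_le_of_continuousAt hcont fun ε hε => by
    set s := x + y + 2 * ε
    have hs : 0 < s := by positivity
    have key : ∀ z, 0 < z → (z / s) ^ (1 - p) * z ^ p = z * s ^ (p - 1) := by
      intro z hz
      rw [Real.div_rpow hz.le hs.le, Real.rpow_sub hz, Real.rpow_sub hs, Real.rpow_sub hs,
        Real.rpow_one, Real.rpow_one]
      field_simp
    have hθ : 1 - (x + ε) / s = (y + ε) / s := by field_simp; ring
    calc c ≤ ((x + ε) / s) ^ (1 - p) * x ^ p + (1 - (x + ε) / s) ^ (1 - p) * y ^ p :=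
          h _ ⟨by positivity, (div_lt_one hs).2 (by linarith)⟩
      _ ≤ ((x + ε) / s) ^ (1 - p) * (x + ε) ^ p + ((y + ε) / s) ^ (1 - p) * (y + ε) ^ p := by
          rw [hθ]
          gcongr <;> linarith
      _ = s ^ p := by
          rw [key _ (by positivity), key _ (by positivity), ← add_mul,
            show x + ε + (y + ε) = s by ring, ← Real.rpow_one_add' hs.le (by linarith)]
          ring_nf

theorem abs_mul_le_young {p q x y s : ℝ} (hpq : p.HolderConjugate q) (hs : 0 < s) :
    |x * y| ≤ s / p * |x| ^ p + s ^ (1 - q) / q * |y| ^ q := by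
  have hσ : 0 < s ^ (1 / p) := by positivity
  have h := Real.young_inequality_of_nonneg (mul_nonneg hσ.le (abs_nonneg x))
    (div_nonneg (abs_nonneg y) hσ.le) hpq
  have hqp : 1 / p * q = q - 1 := by rw [← hpq.symm.div_conj_eq_sub_one]; ring
  rw [Real.mul_rpow hσ.le (abs_nonneg x), Real.div_rpow (abs_nonneg y) hσ.le,
    ← Real.rpow_mul hs.le, ← Real.rpow_mul hs.le, hqp, one_div_mul_cancel hpq.ne_zero,
    Real.rpow_one] at h
  calc |x * y| = s ^ (1 / p) * |x| * (|y| / s ^ (1 / p)) := by rw [abs_mul]; field_simp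
    _ ≤ _ := h
    _ = _ := by rw [Real.rpow_sub hs, Real.rpow_sub hs, Real.rpow_one]; field_simp

/-- Hölder's inequality `c ≤ a^(1/p) b^(1/q)` recovered from Young's inequality with a rational
parameter: by continuity the bound holds for real `s`, and `s = ((b+δ)/(a+δ))^(1/q)` makes it
sharp up to `δ`. -/
theorem le_rpow_mul_rpow_of_forall_rat {p q a b c : ℝ} (hpq : p.HolderConjugate q)
    (ha : 0 ≤ a) (hb : 0 ≤ b) (h : ∀ s : ℚ, 0 < s → c ≤ s / p * a + s ^ (1 - q) / q * b) :
    c ≤ a ^ (1 / p) * b ^ (1 / q) := by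
  have hreal : ∀ s : ℝ, 0 < s → c ≤ s / p * a + s ^ (1 - q) / q * b := by
    intro s hs
    have := Rat.isDenseEmbedding_coe_real.isDenseInducing.nhdsWithin_neBot s
    have hcont : ContinuousAt (fun s : ℝ => s / p * a + s ^ (1 - q) / q * b) s := by
      have := Real.continuousAt_rpow_const s (1 - q) (Or.inl hs.ne')
      fun_prop
    refine ge_of_tendsto (hcont.tendsto.mono_left
      (nhdsWithin_le_nhds (s := range ((↑) : ℚ → ℝ)))) ?_
    filter_upwards [nhdsWithin_le_nhds (Ioi_mem_nhds hs), self_mem_nhdsWithin]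
      with r hr ⟨r', hr'⟩
    subst hr'
    exact h r' (Rat.cast_pos.1 (mem_Ioi.1 hr))
  have hcont : ContinuousAt (fun δ : ℝ => (a + δ) ^ (1 / p) * (b + δ) ^ (1 / q)) 0 :=
    ((Real.continuousAt_rpow_const _ _ (Or.inr hpq.one_div_nonneg)).comp (by fun_prop)).mul
      ((Real.continuousAt_rpow_const _ _ (Or.inr hpq.symm.one_div_nonneg)).comp (by fun_prop))
  simpa using le_of_forall_pos_le_of_continuousAt hcont fun δ hδ => by
    have hA : 0 < a + δ := by linarith
    have hB : 0 < b + δ := by linarith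
    have hs : 0 < ((b + δ) / (a + δ)) ^ (1 / q) := by positivity
    have hsq : (((b + δ) / (a + δ)) ^ (1 / q)) ^ q = (b + δ) / (a + δ) := by
      rw [← Real.rpow_mul (by positivity), one_div_mul_cancel hpq.symm.ne_zero, Real.rpow_one]
    have hpq' := hpq.inv_add_inv_eq_one
    have := hpq.pos; have := hpq.symm.pos
    calc c ≤ _ := hreal _ hs
      _ ≤ ((b + δ) / (a + δ)) ^ (1 / q) / p * (a + δ)
            + (((b + δ) / (a + δ)) ^ (1 / q)) ^ (1 - q) / q * (b + δ) := by
          gcongr <;> linarith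
      _ = ((b + δ) / (a + δ)) ^ (1 / q) * (a + δ) * (p⁻¹ + q⁻¹) := by
          rw [Real.rpow_sub hs, Real.rpow_one, hsq]
          field_simp
      _ = (a + δ) ^ (1 / p) * (b + δ) ^ (1 / q) := by
          rw [hpq', mul_one, Real.div_rpow hB.le hA.le, one_div, one_div,
            ← hpq.symm.one_sub_inv, Real.rpow_sub hA, Real.rpow_one]
          field_simp

theorem abs_mul_div_add_rpow_le {p x a b : ℝ} (hp : 1 ≤ p) (ha : 0 ≤ a) (hb : 0 ≤ b)
    (h : |x| ^ p ≤ a + b) : |x * (a / (a + b))| ^ p ≤ a := by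
  rcases (add_nonneg ha hb).eq_or_lt with hs | hs
  · rw [← hs, div_zero, mul_zero, abs_zero, Real.zero_rpow (by linarith)]
    exact ha
  have hθ : 0 ≤ a / (a + b) := by positivity
  calc |x * (a / (a + b))| ^ p = |x| ^ p * (a / (a + b)) ^ p := by
        rw [abs_mul, abs_of_nonneg hθ, Real.mul_rpow (abs_nonneg x) hθ]
    _ ≤ (a + b) * (a / (a + b)) := by
        gcongr
        exact Real.rpow_le_self_of_le_one hθ ((div_le_one hs).2 (by linarith)) hp
    _ = a := by field_simp

theorem mul_div_add_add_mul_div_add {p x a b : ℝ} (hp : 0 < p) (h : |x| ^ p ≤ a + b) :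
    x * (a / (a + b)) + x * (b / (a + b)) = x := by
  rcases eq_or_ne (a + b) 0 with hs | hs
  · rw [hs] at h
    have : x = 0 := by
      simpa [hp.ne'] using le_antisymm h (Real.rpow_nonneg (abs_nonneg x) p)
    simp [this]
  · field_simp

theorem mul_abs_rpow_div_self {p : ℝ} (hp : p ≠ 0) (x : ℝ) : x * (|x| ^ p / x) = |x| ^ p := by
  rcases eq_or_ne x 0 with rfl | hx
  · simp [hp]
  · field_simp

theorem abs_abs_rpow_div_self_rpow {p q : ℝ} (hpq : p.HolderConjugate q) (x : ℝ) :
    |(|x| ^ p / x)| ^ q = |x| ^ p := by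
  rcases eq_or_ne x 0 with rfl | hx
  · simp [hpq.ne_zero, hpq.symm.ne_zero]
  · have hx' : 0 < |x| := abs_pos.2 hx
    rw [abs_div, abs_of_nonneg (by positivity), ← Real.rpow_sub_one hx'.ne',
      ← Real.rpow_mul hx'.le, hpq.sub_one_mul_conj]

theorem abs_div_abs_rpow_mul_rpow_le_one {p q : ℝ} (hpq : p.HolderConjugate q) (y : ℝ) :
    |y / |y| ^ p| * (|y| ^ p) ^ (1 / q) ≤ 1 := by
  rcases eq_or_ne y 0 with rfl | hy
  · simp
  · have hy' : 0 < |y| := abs_pos.2 hy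
    rw [abs_div, abs_of_nonneg (Real.rpow_nonneg hy'.le p), ← Real.rpow_mul hy'.le, mul_one_div,
      hpq.div_conj_eq_sub_one, Real.rpow_sub_one hy'.ne', div_mul_div_cancel₀ (by positivity),
      div_self hy'.ne']

namespace MeasureTheory.AEEqFun

theorem abs_le_abs_of_ae {f g : Ω →ₘ[μ] ℝ} (h : ∀ᵐ ω ∂μ, |g ω| ≤ |f ω|) : |g| ≤ |f| := by
  rw [← coeFn_le]
  filter_upwards [coeFn_abs g, coeFn_abs f, h] with ω hg hf h
  rw [hg, hf]
  exact h

theorem nonneg_iff {f : Ω →ₘ[μ] ℝ} : 0 ≤ f ↔ ∀ᵐ ω ∂μ, 0 ≤ f ω := by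
  rw [← coeFn_le]
  refine eventually_congr ?_
  filter_upwards [coeFn_zero (β := ℝ) (μ := μ)] with ω h
  rw [h, Pi.zero_apply]

theorem smul_nonneg {c : ℝ} (hc : 0 ≤ c) {f : Ω →ₘ[μ] ℝ} (hf : 0 ≤ f) : 0 ≤ c • f := by
  rw [nonneg_iff] at hf ⊢
  filter_upwards [hf, coeFn_smul c f] with ω hf e
  rw [e, Pi.smul_apply, smul_eq_mul]
  exact mul_nonneg hc hf

theorem coeFn_absRpow (p : ℝ) (f : Ω →ₘ[μ] ℝ) : ⇑(absRpow p f) =ᵐ[μ] fun ω => |f ω| ^ p :=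
  coeFn_mk _ _

theorem add_mul (f g h : Ω →ₘ[μ] ℝ) : (f + g) * h = f * h + g * h := by
  refine ext ?_
  filter_upwards [coeFn_mul (f + g) h, coeFn_add f g, coeFn_add (f * h) (g * h),
    coeFn_mul f h, coeFn_mul g h] with ω h₁ h₂ h₃ h₄ h₅
  simp only [Pi.add_apply, Pi.mul_apply] at *
  rw [h₁, h₂, h₃, h₄, h₅, _root_.add_mul]

theorem mul_add (f g h : Ω →ₘ[μ] ℝ) : f * (g + h) = f * g + f * h := by
  refine ext ?_
  filter_upwards [coeFn_mul f (g + h), coeFn_add g h, coeFn_add (f * g) (f * h),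
    coeFn_mul f g, coeFn_mul f h] with ω h₁ h₂ h₃ h₄ h₅
  simp only [Pi.add_apply, Pi.mul_apply] at *
  rw [h₁, h₂, h₃, h₄, h₅, _root_.mul_add]

theorem smul_mul_assoc (c : ℝ) (f g : Ω →ₘ[μ] ℝ) : (c • f) * g = c • (f * g) := by
  refine ext ?_
  filter_upwards [coeFn_mul (c • f) g, coeFn_smul c f, coeFn_smul c (f * g),
    coeFn_mul f g] with ω h₁ h₂ h₃ h₄
  simp only [Pi.smul_apply, Pi.mul_apply, smul_eq_mul] at *
  rw [h₁, h₂, h₃, h₄, mul_assoc]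

theorem mul_smul_comm (c : ℝ) (f g : Ω →ₘ[μ] ℝ) : f * (c • g) = c • (f * g) := by
  refine ext ?_
  filter_upwards [coeFn_mul f (c • g), coeFn_smul c g, coeFn_smul c (f * g),
    coeFn_mul f g] with ω h₁ h₂ h₃ h₄
  simp only [Pi.smul_apply, Pi.mul_apply, smul_eq_mul] at *
  rw [h₁, h₂, h₃, h₄, mul_left_comm]

/-- Riesz decomposition: split `v` proportionally to `|w₀|` and `|w₁|`. -/
theorem exists_add_eq_of_ae_rpow_le {p : ℝ} (hp : 1 ≤ p) {v w₀ w₁ : Ω →ₘ[μ] ℝ}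
    (h : ∀ᵐ ω ∂μ, |v ω| ^ p ≤ |w₀ ω| + |w₁ ω|) :
    ∃ a₀ a₁ : Ω →ₘ[μ] ℝ, v = a₀ + a₁ ∧ (∀ᵐ ω ∂μ, |a₀ ω| ^ p ≤ |w₀ ω|) ∧
      ∀ᵐ ω ∂μ, |a₁ ω| ^ p ≤ |w₁ ω| := by
  have hm : ∀ w w' : Ω →ₘ[μ] ℝ,
      AEStronglyMeasurable (fun ω => v ω * (|w ω| / (|w ω| + |w' ω|))) μ := by
    intro w w'
    have := v.aemeasurable; have := w.aemeasurable; have := w'.aemeasurable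
    exact (by fun_prop : AEMeasurable _ μ).aestronglyMeasurable
  refine ⟨mk _ (hm w₀ w₁), mk _ (hm w₁ w₀), ext ?_, ?_, ?_⟩
  · filter_upwards [h, coeFn_mk _ (hm w₀ w₁), coeFn_mk _ (hm w₁ w₀),
      coeFn_add (mk _ (hm w₀ w₁)) (mk _ (hm w₁ w₀))] with ω h h₀ h₁ h₂
    rw [h₂, Pi.add_apply, h₀, h₁, add_comm |w₁ ω|,
      mul_div_add_add_mul_div_add (by linarith) h]
  · filter_upwards [h, coeFn_mk _ (hm w₀ w₁)] with ω h h₀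
    rw [h₀]
    exact abs_mul_div_add_rpow_le hp (abs_nonneg _) (abs_nonneg _) h
  · filter_upwards [h, coeFn_mk _ (hm w₁ w₀)] with ω h h₁
    rw [h₁]
    exact abs_mul_div_add_rpow_le hp (abs_nonneg _) (abs_nonneg _) (by linarith)

end MeasureTheory.AEEqFun

namespace BanachFunctionLattice

variable (X : BanachFunctionLattice Ω μ) {f g : Ω →ₘ[μ] ℝ}

theorem mem_of_ae_abs_le (hf : f ∈ X.carrier) (h : ∀ᵐ ω ∂μ, |g ω| ≤ |f ω|) : g ∈ X.carrier :=
  X.ideal_mem f hf g (AEEqFun.abs_le_abs_of_ae h)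

theorem norm_le_of_ae_abs_le (hf : f ∈ X.carrier) (h : ∀ᵐ ω ∂μ, |g ω| ≤ |f ω|) :
    X.norm g ≤ X.norm f :=
  X.ideal_norm_le f hf g (AEEqFun.abs_le_abs_of_ae h)

end BanachFunctionLattice

theorem ae_abs_absRpow_le {p : ℝ} {f g : Ω →ₘ[μ] ℝ} (h : ∀ᵐ ω ∂μ, |f ω| ^ p ≤ |g ω|) :
    ∀ᵐ ω ∂μ, |absRpow p f ω| ≤ |g ω| := by
  filter_upwards [h, AEEqFun.coeFn_absRpow p f] with ω h e
  rwa [e, abs_of_nonneg (Real.rpow_nonneg (abs_nonneg _) _)]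

theorem ae_absRpow_nonneg (p : ℝ) (f : Ω →ₘ[μ] ℝ) : ∀ᵐ ω ∂μ, 0 ≤ absRpow p f ω := by
  filter_upwards [AEEqFun.coeFn_absRpow p f] with ω e
  rw [e]
  positivity

theorem absRpow_zero {p : ℝ} (hp : p ≠ 0) : absRpow p (0 : Ω →ₘ[μ] ℝ) = 0 := by
  refine AEEqFun.ext ?_
  filter_upwards [AEEqFun.coeFn_absRpow p (0 : Ω →ₘ[μ] ℝ), AEEqFun.coeFn_zero (β := ℝ) (μ := μ)]
    with ω h₁ h₂
  rw [h₁, h₂, Pi.zero_apply, abs_zero, Real.zero_rpow hp]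

theorem zero_mem_pConv (X : BanachFunctionLattice Ω μ) {p : ℝ} (hp : p ≠ 0) :
    0 ∈ (pConv X p).carrier := by
  show absRpow p 0 ∈ X.carrier
  rw [absRpow_zero hp]
  exact X.zero_mem

theorem pConv_norm_nonneg (X : BanachFunctionLattice Ω μ) (p : ℝ) :
    ∀ f ∈ (pConv X p).carrier, 0 ≤ (pConv X p).norm f :=
  fun _ hf => Real.rpow_nonneg (X.norm_nonneg _ hf) _

section KFunctional

variable {A₀ A₁ : FunctionSpace Ω μ} {t c : ℝ} {f : Ω →ₘ[μ] ℝ}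

theorem mem_sumSet_of_mem_left (h₁ : 0 ∈ A₁.carrier) (hf : f ∈ A₀.carrier) :
    f ∈ sumSet A₀ A₁ :=
  ⟨f, hf, 0, h₁, (add_zero f).symm⟩

theorem mem_sumSet_of_mem_right (h₀ : 0 ∈ A₀.carrier) (hf : f ∈ A₁.carrier) :
    f ∈ sumSet A₀ A₁ :=
  ⟨0, h₀, f, hf, (zero_add f).symm⟩

theorem le_Kfun (hf : f ∈ sumSet A₀ A₁)
    (h : ∀ a₀ ∈ A₀.carrier, ∀ a₁ ∈ A₁.carrier, f = a₀ + a₁ → c ≤ A₀.norm a₀ + t * A₁.norm a₁) :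
    c ≤ Kfun A₀ A₁ t f := by
  obtain ⟨a₀, ha₀, a₁, ha₁, hf⟩ := hf
  refine le_csInf ⟨_, a₀, ha₀, a₁, ha₁, hf, rfl⟩ ?_
  rintro r ⟨b₀, hb₀, b₁, hb₁, hb, rfl⟩
  exact h b₀ hb₀ b₁ hb₁ hb

theorem Kfun_le (h₀ : ∀ a ∈ A₀.carrier, 0 ≤ A₀.norm a) (h₁ : ∀ a ∈ A₁.carrier, 0 ≤ A₁.norm a)
    (ht : 0 ≤ t) {a₀ a₁ : Ω →ₘ[μ] ℝ} (ha₀ : a₀ ∈ A₀.carrier) (ha₁ : a₁ ∈ A₁.carrier)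
    (hf : f = a₀ + a₁) : Kfun A₀ A₁ t f ≤ A₀.norm a₀ + t * A₁.norm a₁ := by
  refine csInf_le ⟨0, ?_⟩ ⟨a₀, ha₀, a₁, ha₁, hf, rfl⟩
  rintro r ⟨b₀, hb₀, b₁, hb₁, -, rfl⟩
  exact add_nonneg (h₀ b₀ hb₀) (mul_nonneg ht (h₁ b₁ hb₁))

theorem Kfun_nonneg (h₀ : ∀ a ∈ A₀.carrier, 0 ≤ A₀.norm a)
    (h₁ : ∀ a ∈ A₁.carrier, 0 ≤ A₁.norm a) (ht : 0 ≤ t) : 0 ≤ Kfun A₀ A₁ t f := by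
  refine Real.sInf_nonneg ?_
  rintro r ⟨b₀, hb₀, b₁, hb₁, -, rfl⟩
  exact add_nonneg (h₀ b₀ hb₀) (mul_nonneg ht (h₁ b₁ hb₁))

end KFunctional

theorem ae_abs_absRpow_add_le {p c₀ c₁ : ℝ} (hc₀ : 0 ≤ c₀) (hc₁ : 0 ≤ c₁) (a₀ a₁ : Ω →ₘ[μ] ℝ)
    (h : ∀ x y : ℝ, |x + y| ^ p ≤ c₀ * |x| ^ p + c₁ * |y| ^ p) :
    ∀ᵐ ω ∂μ, |absRpow p (a₀ + a₁) ω| ≤ |(c₀ • absRpow p a₀) ω| + |(c₁ • absRpow p a₁) ω| := by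
  filter_upwards [AEEqFun.coeFn_absRpow p (a₀ + a₁), AEEqFun.coeFn_absRpow p a₀,
    AEEqFun.coeFn_absRpow p a₁, AEEqFun.coeFn_add a₀ a₁, AEEqFun.coeFn_smul c₀ (absRpow p a₀),
    AEEqFun.coeFn_smul c₁ (absRpow p a₁)] with ω e e₀ e₁ e₂ e₃ e₄
  simp only [Pi.add_apply, Pi.smul_apply, smul_eq_mul] at *
  rw [e, e₂, e₃, e₄, e₀, e₁, abs_of_nonneg (by positivity : (0 : ℝ) ≤ |a₀ ω + a₁ ω| ^ p),
    abs_of_nonneg (by positivity : (0 : ℝ) ≤ c₀ * |a₀ ω| ^ p),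
    abs_of_nonneg (by positivity : (0 : ℝ) ≤ c₁ * |a₁ ω| ^ p)]
  exact h _ _

section LatticeCouple

variable {X₀ X₁ : BanachFunctionLattice Ω μ} {t : ℝ}

theorem add_mem_sumSet {f g : Ω →ₘ[μ] ℝ} (hf : f ∈ sumSet X₀.toFunctionSpace X₁.toFunctionSpace)
    (hg : g ∈ sumSet X₀.toFunctionSpace X₁.toFunctionSpace) :
    f + g ∈ sumSet X₀.toFunctionSpace X₁.toFunctionSpace := by
  obtain ⟨a₀, ha₀, a₁, ha₁, rfl⟩ := hf
  obtain ⟨b₀, hb₀, b₁, hb₁, rfl⟩ := hg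
  exact ⟨a₀ + b₀, X₀.add_mem ha₀ hb₀, a₁ + b₁, X₁.add_mem ha₁ hb₁, add_add_add_comm _ _ _ _⟩

theorem smul_mem_sumSet (c : ℝ) {f : Ω →ₘ[μ] ℝ}
    (hf : f ∈ sumSet X₀.toFunctionSpace X₁.toFunctionSpace) :
    c • f ∈ sumSet X₀.toFunctionSpace X₁.toFunctionSpace := by
  obtain ⟨a₀, ha₀, a₁, ha₁, rfl⟩ := hf
  exact ⟨c • a₀, X₀.smul_mem c ha₀, c • a₁, X₁.smul_mem c ha₁, smul_add c a₀ a₁⟩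

theorem exists_decomp_of_ae_abs_le_add {G D₀ D₁ : Ω →ₘ[μ] ℝ} (hD₀ : D₀ ∈ X₀.carrier)
    (hD₁ : D₁ ∈ X₁.carrier) (h : ∀ᵐ ω ∂μ, |G ω| ≤ |D₀ ω| + |D₁ ω|) :
    ∃ b₀ ∈ X₀.carrier, ∃ b₁ ∈ X₁.carrier, G = b₀ + b₁ ∧
      X₀.norm b₀ ≤ X₀.norm D₀ ∧ X₁.norm b₁ ≤ X₁.norm D₁ := by
  obtain ⟨b₀, b₁, hG, hb₀, hb₁⟩ :=
    AEEqFun.exists_add_eq_of_ae_rpow_le le_rfl (by simpa only [Real.rpow_one] using h)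
  simp only [Real.rpow_one] at hb₀ hb₁
  exact ⟨b₀, X₀.mem_of_ae_abs_le hD₀ hb₀, b₁, X₁.mem_of_ae_abs_le hD₁ hb₁, hG,
    X₀.norm_le_of_ae_abs_le hD₀ hb₀, X₁.norm_le_of_ae_abs_le hD₁ hb₁⟩

theorem mem_sumSet_of_ae_abs_le {v w : Ω →ₘ[μ] ℝ}
    (hw : w ∈ sumSet X₀.toFunctionSpace X₁.toFunctionSpace) (h : ∀ᵐ ω ∂μ, |v ω| ≤ |w ω|) :
    v ∈ sumSet X₀.toFunctionSpace X₁.toFunctionSpace := by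
  obtain ⟨w₀, hw₀, w₁, hw₁, rfl⟩ := hw
  have h' : ∀ᵐ ω ∂μ, |v ω| ≤ |w₀ ω| + |w₁ ω| := by
    filter_upwards [h, AEEqFun.coeFn_add w₀ w₁] with ω h e
    rw [e, Pi.add_apply] at h
    exact h.trans (abs_add_le _ _)
  obtain ⟨b₀, hb₀, b₁, hb₁, hv, -⟩ := exists_decomp_of_ae_abs_le_add hw₀ hw₁ h'
  exact ⟨b₀, hb₀, b₁, hb₁, hv⟩

theorem Kfun_le_of_ae_abs_le_add (ht : 0 ≤ t) {G D₀ D₁ : Ω →ₘ[μ] ℝ} (hD₀ : D₀ ∈ X₀.carrier)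
    (hD₁ : D₁ ∈ X₁.carrier) (h : ∀ᵐ ω ∂μ, |G ω| ≤ |D₀ ω| + |D₁ ω|) :
    Kfun X₀.toFunctionSpace X₁.toFunctionSpace t G ≤ X₀.norm D₀ + t * X₁.norm D₁ := by
  obtain ⟨b₀, hb₀, b₁, hb₁, hG, hn₀, hn₁⟩ := exists_decomp_of_ae_abs_le_add hD₀ hD₁ h
  calc Kfun X₀.toFunctionSpace X₁.toFunctionSpace t G ≤ X₀.norm b₀ + t * X₁.norm b₁ :=
        Kfun_le (A₀ := X₀.toFunctionSpace) (A₁ := X₁.toFunctionSpace) X₀.norm_nonneg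
          X₁.norm_nonneg ht hb₀ hb₁ hG
    _ ≤ X₀.norm D₀ + t * X₁.norm D₁ := by gcongr

theorem mul_Kfun_le_Kfun_smul {c : ℝ} (hc : 0 < c) (ht : 0 ≤ t) {f : Ω →ₘ[μ] ℝ}
    (hf : f ∈ sumSet X₀.toFunctionSpace X₁.toFunctionSpace) :
    c * Kfun X₀.toFunctionSpace X₁.toFunctionSpace t f
      ≤ Kfun X₀.toFunctionSpace X₁.toFunctionSpace t (c • f) := by
  refine le_Kfun (smul_mem_sumSet c hf) fun b₀ hb₀ b₁ hb₁ hb => ?_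
  have hf' : f = c⁻¹ • b₀ + c⁻¹ • b₁ := by rw [← smul_add, ← hb, inv_smul_smul₀ hc.ne']
  have hK := Kfun_le (A₀ := X₀.toFunctionSpace) (A₁ := X₁.toFunctionSpace) X₀.norm_nonneg
    X₁.norm_nonneg ht (X₀.smul_mem c⁻¹ hb₀) (X₁.smul_mem c⁻¹ hb₁) hf'
  simp only [BanachFunctionLattice.toFunctionSpace, X₀.norm_smul _ _ hb₀,
    X₁.norm_smul _ _ hb₁, abs_inv, abs_of_pos hc] at hK ⊢
  calc c * Kfun _ _ t f ≤ c * (c⁻¹ * X₀.norm b₀ + t * (c⁻¹ * X₁.norm b₁)) := by gcongr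
    _ = X₀.norm b₀ + t * X₁.norm b₁ := by field_simp

theorem absRpow_mem_sumSet {p : ℝ} (hp : 1 ≤ p) {f : Ω →ₘ[μ] ℝ}
    (hf : f ∈ sumSet (pConv X₀ p) (pConv X₁ p)) :
    absRpow p f ∈ sumSet X₀.toFunctionSpace X₁.toFunctionSpace := by
  obtain ⟨a₀, ha₀, a₁, ha₁, rfl⟩ := hf
  have h := ae_abs_absRpow_add_le (by positivity) (by positivity) a₀ a₁ fun x y =>
    calc |x + y| ^ p ≤ (|x| + |y|) ^ p := by gcongr; exact abs_add_le _ _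
      _ ≤ 2 ^ (p - 1) * (|x| ^ p + |y| ^ p) :=
        add_rpow_le_two_rpow_mul hp (abs_nonneg _) (abs_nonneg _)
      _ = 2 ^ (p - 1) * |x| ^ p + 2 ^ (p - 1) * |y| ^ p := mul_add _ _ _
  obtain ⟨b₀, hb₀, b₁, hb₁, hb, -⟩ := exists_decomp_of_ae_abs_le_add (X₀.smul_mem _ ha₀)
    (X₁.smul_mem _ ha₁) h
  exact ⟨b₀, hb₀, b₁, hb₁, hb⟩

theorem mul_mem_sumSet {p q : ℝ} (hpq : p.HolderConjugate q) {x y : Ω →ₘ[μ] ℝ}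
    (hx : absRpow p x ∈ sumSet X₀.toFunctionSpace X₁.toFunctionSpace)
    (hy : absRpow q y ∈ sumSet X₀.toFunctionSpace X₁.toFunctionSpace) :
    x * y ∈ sumSet X₀.toFunctionSpace X₁.toFunctionSpace := by
  refine mem_sumSet_of_ae_abs_le (add_mem_sumSet hx hy) ?_
  filter_upwards [AEEqFun.coeFn_mul x y, AEEqFun.coeFn_add (absRpow p x) (absRpow q y),
    AEEqFun.coeFn_absRpow p x, AEEqFun.coeFn_absRpow q y] with ω e e' ex ey
  rw [e, e', Pi.mul_apply, Pi.add_apply, ex, ey, abs_of_nonneg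
    (add_nonneg (Real.rpow_nonneg (abs_nonneg _) p) (Real.rpow_nonneg (abs_nonneg _) q))]
  calc |x ω * y ω| ≤ 1 / p * |x ω| ^ p + 1 ^ (1 - q) / q * |y ω| ^ q :=
        abs_mul_le_young hpq one_pos
    _ ≤ |x ω| ^ p + |y ω| ^ q := by
        rw [Real.one_rpow]
        gcongr
        · exact mul_le_of_le_one_left (by positivity) ((div_le_one hpq.pos).2 hpq.lt.le)
        · exact mul_le_of_le_one_left (by positivity) ((div_le_one hpq.symm.pos).2 hpq.symm.lt.le)

end LatticeCouple

section PositiveOperator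

variable {X₀ X₁ : BanachFunctionLattice Ω μ} {S : (Ω →ₘ[μ] ℝ) → (Ω →ₘ[μ] ℝ)}

theorem IsPositiveOn.ae_nonneg (hSpos : IsPositiveOn X₀.toFunctionSpace X₁.toFunctionSpace S)
    {w : Ω →ₘ[μ] ℝ} (hw : w ∈ sumSet X₀.toFunctionSpace X₁.toFunctionSpace)
    (h : ∀ᵐ ω ∂μ, 0 ≤ w ω) : ∀ᵐ ω ∂μ, 0 ≤ S w ω :=
  AEEqFun.nonneg_iff.1 (hSpos w hw (AEEqFun.nonneg_iff.2 h))

theorem IsPositiveOn.ae_abs_le (hSpos : IsPositiveOn X₀.toFunctionSpace X₁.toFunctionSpace S)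
    (hS : IsBoundedCoupleOperator X₀.toFunctionSpace X₁.toFunctionSpace S) {w V : Ω →ₘ[μ] ℝ}
    (hw : w ∈ sumSet X₀.toFunctionSpace X₁.toFunctionSpace)
    (hV : V ∈ sumSet X₀.toFunctionSpace X₁.toFunctionSpace) (h : ∀ᵐ ω ∂μ, |w ω| ≤ V ω) :
    ∀ᵐ ω ∂μ, |S w ω| ≤ S V ω := by
  have hw' := smul_mem_sumSet (-1) hw
  have hup := hSpos.ae_nonneg (add_mem_sumSet hV hw) <| by
    filter_upwards [h, AEEqFun.coeFn_add V w] with ω h e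
    rw [e, Pi.add_apply]
    linarith [neg_abs_le (w ω)]
  have hlow := hSpos.ae_nonneg (add_mem_sumSet hV hw') <| by
    filter_upwards [h, AEEqFun.coeFn_add V ((-1 : ℝ) • w), AEEqFun.coeFn_smul (-1 : ℝ) w]
      with ω h e e'
    rw [e, Pi.add_apply, e', Pi.smul_apply, smul_eq_mul]
    linarith [le_abs_self (w ω)]
  rw [hS.1 _ hV _ hw] at hup
  rw [hS.1 _ hV _ hw', hS.2.1 _ _ hw] at hlow
  filter_upwards [hup, hlow, AEEqFun.coeFn_add (S V) (S w),
    AEEqFun.coeFn_add (S V) ((-1 : ℝ) • S w), AEEqFun.coeFn_smul (-1 : ℝ) (S w)]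
    with ω hup hlow eup elow e
  rw [eup, Pi.add_apply] at hup
  rw [elow, Pi.add_apply, e, Pi.smul_apply, smul_eq_mul] at hlow
  exact abs_le.2 ⟨by linarith, by linarith⟩

theorem IsPositiveOn.ae_abs_apply_mul_le_young
    (hSpos : IsPositiveOn X₀.toFunctionSpace X₁.toFunctionSpace S)
    (hS : IsBoundedCoupleOperator X₀.toFunctionSpace X₁.toFunctionSpace S) {p q s : ℝ}
    (hpq : p.HolderConjugate q) (hs : 0 < s) {x y : Ω →ₘ[μ] ℝ}
    (hx : absRpow p x ∈ sumSet X₀.toFunctionSpace X₁.toFunctionSpace)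
    (hy : absRpow q y ∈ sumSet X₀.toFunctionSpace X₁.toFunctionSpace) :
    ∀ᵐ ω ∂μ, |S (x * y) ω| ≤ s / p * S (absRpow p x) ω + s ^ (1 - q) / q * S (absRpow q y) ω := by
  have hV := add_mem_sumSet (smul_mem_sumSet (s / p) hx) (smul_mem_sumSet (s ^ (1 - q) / q) hy)
  have hSV := hSpos.ae_abs_le hS (mul_mem_sumSet hpq hx hy) hV <| by
    filter_upwards [AEEqFun.coeFn_mul x y, AEEqFun.coeFn_absRpow p x, AEEqFun.coeFn_absRpow q y,
      AEEqFun.coeFn_add ((s / p) • absRpow p x) ((s ^ (1 - q) / q) • absRpow q y),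
      AEEqFun.coeFn_smul (s / p) (absRpow p x),
      AEEqFun.coeFn_smul (s ^ (1 - q) / q) (absRpow q y)] with ω e ex ey eV e₀ e₁
    simp only [Pi.add_apply, Pi.mul_apply, Pi.smul_apply, smul_eq_mul] at *
    rw [e, eV, e₀, e₁, ex, ey]
    exact abs_mul_le_young hpq hs
  rw [hS.1 _ (smul_mem_sumSet _ hx) _ (smul_mem_sumSet _ hy), hS.2.1 _ _ hx,
    hS.2.1 _ _ hy] at hSV
  filter_upwards [hSV, AEEqFun.coeFn_add ((s / p) • S (absRpow p x))
      ((s ^ (1 - q) / q) • S (absRpow q y)),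
    AEEqFun.coeFn_smul (s / p) (S (absRpow p x)),
    AEEqFun.coeFn_smul (s ^ (1 - q) / q) (S (absRpow q y))] with ω h eV e₀ e₁
  simp only [Pi.add_apply, Pi.smul_apply, smul_eq_mul] at *
  rwa [eV, e₀, e₁] at h

theorem IsPositiveOn.ae_abs_apply_mul_le
    (hSpos : IsPositiveOn X₀.toFunctionSpace X₁.toFunctionSpace S)
    (hS : IsBoundedCoupleOperator X₀.toFunctionSpace X₁.toFunctionSpace S) {p q : ℝ}
    (hpq : p.HolderConjugate q) {x y : Ω →ₘ[μ] ℝ}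
    (hx : absRpow p x ∈ sumSet X₀.toFunctionSpace X₁.toFunctionSpace)
    (hy : absRpow q y ∈ sumSet X₀.toFunctionSpace X₁.toFunctionSpace) :
    ∀ᵐ ω ∂μ, |S (x * y) ω| ≤ S (absRpow p x) ω ^ (1 / p) * S (absRpow q y) ω ^ (1 / q) := by
  have hall : ∀ᵐ ω ∂μ, ∀ s : ℚ, 0 < s → |S (x * y) ω|
      ≤ s / p * S (absRpow p x) ω + (s : ℝ) ^ (1 - q) / q * S (absRpow q y) ω :=
    ae_all_iff.2 fun s => by
      by_cases hs : 0 < s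
      · filter_upwards [hSpos.ae_abs_apply_mul_le_young hS hpq (Rat.cast_pos.2 hs) hx hy]
          with ω h _ using h
      · exact Eventually.of_forall fun ω h => absurd h hs
  filter_upwards [hall, hSpos.ae_nonneg hx (ae_absRpow_nonneg p x),
    hSpos.ae_nonneg hy (ae_absRpow_nonneg q y)] with ω h ha hb
  exact le_rpow_mul_rpow_of_forall_rat hpq ha hb h

theorem IsBoundedCoupleOperator.comp_smul
    (hS : IsBoundedCoupleOperator X₀.toFunctionSpace X₁.toFunctionSpace S) (c : ℝ) :
    IsBoundedCoupleOperator X₀.toFunctionSpace X₁.toFunctionSpace (fun f => S (c • f)) := by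
  obtain ⟨hadd, hsmul, h₀, h₁, ⟨C₀, hC₀⟩, ⟨C₁, hC₁⟩⟩ := hS
  refine ⟨fun f hf g hg => ?_, fun d f hf => ?_, fun f hf => h₀ _ (X₀.smul_mem c hf),
    fun f hf => h₁ _ (X₁.smul_mem c hf), ⟨C₀ * |c|, fun f hf => ?_⟩, ⟨C₁ * |c|, fun f hf => ?_⟩⟩
  · dsimp only
    rw [smul_add, hadd _ (smul_mem_sumSet c hf) _ (smul_mem_sumSet c hg)]
  · dsimp only
    rw [smul_comm, hsmul _ _ (smul_mem_sumSet c hf)]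
  · have := hC₀ _ (X₀.smul_mem c hf)
    simp only [BanachFunctionLattice.toFunctionSpace, X₀.norm_smul c f hf] at this ⊢
    linarith
  · have := hC₁ _ (X₁.smul_mem c hf)
    simp only [BanachFunctionLattice.toFunctionSpace, X₁.norm_smul c f hf] at this ⊢
    linarith

theorem IsPositiveOn.comp_smul (hSpos : IsPositiveOn X₀.toFunctionSpace X₁.toFunctionSpace S)
    {c : ℝ} (hc : 0 ≤ c) :
    IsPositiveOn X₀.toFunctionSpace X₁.toFunctionSpace (fun f => S (c • f)) :=
  fun _ hf hf₀ => hSpos _ (smul_mem_sumSet c hf) (AEEqFun.smul_nonneg hc hf₀)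

theorem CoupleOperatorNormLE.comp_smul {C : ℝ}
    (hSC : CoupleOperatorNormLE X₀.toFunctionSpace X₁.toFunctionSpace S C) (c : ℝ) :
    CoupleOperatorNormLE X₀.toFunctionSpace X₁.toFunctionSpace (fun f => S (c • f))
      (|c| * C) := by
  refine ⟨fun f hf => ?_, fun f hf => ?_⟩
  · have := hSC.1 _ (X₀.smul_mem c hf)
    simp only [BanachFunctionLattice.toFunctionSpace, X₀.norm_smul c f hf] at this ⊢
    linarith
  · have := hSC.2 _ (X₁.smul_mem c hf)
    simp only [BanachFunctionLattice.toFunctionSpace, X₁.norm_smul c f hf] at this ⊢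
    linarith

end PositiveOperator

section KFunctionalComparison

variable {X₀ X₁ : BanachFunctionLattice Ω μ} {p t : ℝ}

theorem Kfun_absRpow_le_Kfun_pConv_rpow (hp : 1 ≤ p) (ht : 0 < t) {g : Ω →ₘ[μ] ℝ}
    (hg : g ∈ sumSet (pConv X₀ p) (pConv X₁ p)) :
    Kfun X₀.toFunctionSpace X₁.toFunctionSpace t (absRpow p g)
      ≤ Kfun (pConv X₀ p) (pConv X₁ p) (t ^ (1 / p)) g ^ p := by
  have hp₀ : 0 < p := by linarith
  have hK := Kfun_nonneg (A₀ := X₀.toFunctionSpace) (A₁ := X₁.toFunctionSpace) X₀.norm_nonneg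
    X₁.norm_nonneg ht.le (f := absRpow p g)
  suffices Kfun X₀.toFunctionSpace X₁.toFunctionSpace t (absRpow p g) ^ (1 / p)
      ≤ Kfun (pConv X₀ p) (pConv X₁ p) (t ^ (1 / p)) g by
    calc _ = (Kfun X₀.toFunctionSpace X₁.toFunctionSpace t (absRpow p g) ^ (1 / p)) ^ p := by
          rw [one_div, Real.rpow_inv_rpow hK hp₀.ne']
      _ ≤ _ := by gcongr
  refine le_Kfun hg fun a₀ ha₀ a₁ ha₁ hg' => ?_
  subst hg'
  have hN₀ := X₀.norm_nonneg _ ha₀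
  have hN₁ := X₁.norm_nonneg _ ha₁
  show _ ≤ X₀.norm (absRpow p a₀) ^ (1 / p) + t ^ (1 / p) * X₁.norm (absRpow p a₁) ^ (1 / p)
  rw [← Real.mul_rpow ht.le hN₁]
  set N₀ := X₀.norm (absRpow p a₀)
  set N₁ := X₁.norm (absRpow p a₁)
  have hweighted : ∀ θ ∈ Ioo (0 : ℝ) 1,
      Kfun X₀.toFunctionSpace X₁.toFunctionSpace t (absRpow p (a₀ + a₁))
        ≤ θ ^ (1 - p) * (N₀ ^ (1 / p)) ^ p + (1 - θ) ^ (1 - p) * ((t * N₁) ^ (1 / p)) ^ p := by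
    rintro θ ⟨hθ₀, hθ₁⟩
    have hθ' : 0 < 1 - θ := by linarith
    have h := ae_abs_absRpow_add_le (p := p) (Real.rpow_nonneg hθ₀.le (1 - p))
      (Real.rpow_nonneg hθ'.le (1 - p)) a₀ a₁ fun x y =>
      calc |x + y| ^ p ≤ (|x| + |y|) ^ p := by gcongr; exact abs_add_le _ _
        _ ≤ _ := add_rpow_le_weighted hp hθ₀ hθ₁ (abs_nonneg _) (abs_nonneg _)
    calc _ ≤ _ := Kfun_le_of_ae_abs_le_add ht.le (X₀.smul_mem _ ha₀) (X₁.smul_mem _ ha₁) h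
      _ = _ := by
        rw [X₀.norm_smul _ _ ha₀, X₁.norm_smul _ _ ha₁, abs_of_nonneg (by positivity),
          abs_of_nonneg (by positivity), one_div, Real.rpow_inv_rpow hN₀ hp₀.ne',
          Real.rpow_inv_rpow (by positivity) hp₀.ne']
        ring
  calc _ ≤ ((N₀ ^ (1 / p) + (t * N₁) ^ (1 / p)) ^ p) ^ (1 / p) := by
        gcongr
        exact le_add_rpow_of_forall_weighted hp (by positivity) (by positivity) hweighted
    _ = _ := by rw [one_div, Real.rpow_rpow_inv (by positivity) hp₀.ne']

theorem Kfun_pConv_rpow_le_Kfun_absRpow (hp : 1 ≤ p) (ht : 0 < t) {f : Ω →ₘ[μ] ℝ}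
    (hf : f ∈ sumSet (pConv X₀ p) (pConv X₁ p)) :
    Kfun (pConv X₀ p) (pConv X₁ p) (t ^ (1 / p)) f ^ p
      ≤ 2 ^ (p - 1) * Kfun X₀.toFunctionSpace X₁.toFunctionSpace t (absRpow p f) := by
  have hp₀ : 0 < p := by linarith
  have hK := Kfun_nonneg (pConv_norm_nonneg X₀ p) (pConv_norm_nonneg X₁ p)
    (Real.rpow_nonneg ht.le (1 / p)) (f := f)
  rw [← div_le_iff₀' (by positivity)]
  refine le_Kfun (absRpow_mem_sumSet hp hf) fun b₀ hb₀ b₁ hb₁ hb => ?_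
  obtain ⟨a₀, a₁, hf', ha₀, ha₁⟩ :=
    AEEqFun.exists_add_eq_of_ae_rpow_le hp (v := f) (w₀ := b₀) (w₁ := b₁) <| by
    filter_upwards [AEEqFun.coeFn_absRpow p f, AEEqFun.coeFn_add b₀ b₁] with ω e e'
    rw [← e, hb, e', Pi.add_apply]
    exact (le_abs_self _).trans (abs_add_le _ _)
  have hM₀ := X₀.norm_nonneg _ hb₀
  have hM₁ := X₁.norm_nonneg _ hb₁
  have ha₀' := ae_abs_absRpow_le ha₀
  have ha₁' := ae_abs_absRpow_le ha₁
  have hN₀ := X₀.norm_nonneg _ (X₀.mem_of_ae_abs_le hb₀ ha₀')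
  have hN₁ := X₁.norm_nonneg _ (X₁.mem_of_ae_abs_le hb₁ ha₁')
  rw [div_le_iff₀' (by positivity)]
  calc Kfun (pConv X₀ p) (pConv X₁ p) (t ^ (1 / p)) f ^ p
      ≤ (X₀.norm (absRpow p a₀) ^ (1 / p) + t ^ (1 / p) * X₁.norm (absRpow p a₁) ^ (1 / p))
          ^ p := by
        gcongr
        exact Kfun_le (pConv_norm_nonneg X₀ p) (pConv_norm_nonneg X₁ p)
          (Real.rpow_nonneg ht.le _) (X₀.mem_of_ae_abs_le hb₀ ha₀') (X₁.mem_of_ae_abs_le hb₁ ha₁')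
          hf'
    _ ≤ (X₀.norm b₀ ^ (1 / p) + (t * X₁.norm b₁) ^ (1 / p)) ^ p := by
        rw [Real.mul_rpow ht.le hM₁]
        gcongr
        · exact X₀.norm_le_of_ae_abs_le hb₀ ha₀'
        · exact X₁.norm_le_of_ae_abs_le hb₁ ha₁'
    _ ≤ 2 ^ (p - 1) * ((X₀.norm b₀ ^ (1 / p)) ^ p + ((t * X₁.norm b₁) ^ (1 / p)) ^ p) :=
        add_rpow_le_two_rpow_mul hp (by positivity) (by positivity)
    _ = 2 ^ (p - 1) * (X₀.norm b₀ + t * X₁.norm b₁) := by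
        rw [one_div, Real.rpow_inv_rpow hM₀ hp₀.ne', Real.rpow_inv_rpow (by positivity) hp₀.ne']

end KFunctionalComparison

noncomputable def absRpowDiv (p : ℝ) (f : Ω →ₘ[μ] ℝ) : Ω →ₘ[μ] ℝ :=
  AEEqFun.compMeasurable (fun x => |x| ^ p / x) (by fun_prop) f

noncomputable def divAbsRpow (p : ℝ) (g : Ω →ₘ[μ] ℝ) : Ω →ₘ[μ] ℝ :=
  AEEqFun.compMeasurable (fun x => x / |x| ^ p) (by fun_prop) g

theorem coeFn_absRpowDiv (p : ℝ) (f : Ω →ₘ[μ] ℝ) :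
    ⇑(absRpowDiv p f) =ᵐ[μ] fun ω => |f ω| ^ p / f ω :=
  AEEqFun.coeFn_compMeasurable _ _ f

theorem coeFn_divAbsRpow (p : ℝ) (g : Ω →ₘ[μ] ℝ) :
    ⇑(divAbsRpow p g) =ᵐ[μ] fun ω => g ω / |g ω| ^ p :=
  AEEqFun.coeFn_compMeasurable _ _ g

theorem mul_absRpowDiv {p : ℝ} (hp : p ≠ 0) (f : Ω →ₘ[μ] ℝ) :
    f * absRpowDiv p f = absRpow p f := by
  refine AEEqFun.ext ?_
  filter_upwards [AEEqFun.coeFn_mul f (absRpowDiv p f), coeFn_absRpowDiv p f,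
    AEEqFun.coeFn_absRpow p f] with ω e e' e''
  rw [e, Pi.mul_apply, e', e'', mul_abs_rpow_div_self hp]

theorem absRpow_absRpowDiv {p q : ℝ} (hpq : p.HolderConjugate q) (f : Ω →ₘ[μ] ℝ) :
    absRpow q (absRpowDiv p f) = absRpow p f := by
  refine AEEqFun.ext ?_
  filter_upwards [AEEqFun.coeFn_absRpow q (absRpowDiv p f), coeFn_absRpowDiv p f,
    AEEqFun.coeFn_absRpow p f] with ω e e' e''
  rw [e, e', e'', abs_abs_rpow_div_self_rpow hpq]

theorem divAbsRpow_mul_absRpow (p : ℝ) (g : Ω →ₘ[μ] ℝ) : divAbsRpow p g * absRpow p g = g := by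
  refine AEEqFun.ext ?_
  filter_upwards [AEEqFun.coeFn_mul (divAbsRpow p g) (absRpow p g),
    coeFn_divAbsRpow p g, AEEqFun.coeFn_absRpow p g] with ω e e' e''
  rw [e, Pi.mul_apply, e', e'']
  exact div_mul_cancel_of_imp fun h =>
    abs_eq_zero.1 ((Real.rpow_eq_zero_iff_of_nonneg (abs_nonneg (g ω))).1 h).1

theorem mem_pConv_and_norm_le_of_ae_rpow_le (X : BanachFunctionLattice Ω μ) {p D : ℝ}
    (hp : 0 < p) (hD : 0 ≤ D) {h v B : Ω →ₘ[μ] ℝ} (hh : h ∈ (pConv X p).carrier)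
    (hB : B ∈ X.carrier) (hBn : X.norm B ≤ D * X.norm (absRpow p h))
    (hv : ∀ᵐ ω ∂μ, |v ω| ^ p ≤ |B ω|) :
    v ∈ (pConv X p).carrier ∧ (pConv X p).norm v ≤ D ^ (1 / p) * (pConv X p).norm h := by
  have hv' := ae_abs_absRpow_le hv
  have hmem := X.mem_of_ae_abs_le hB hv'
  refine ⟨hmem, ?_⟩
  show X.norm (absRpow p v) ^ (1 / p) ≤ D ^ (1 / p) * X.norm (absRpow p h) ^ (1 / p)
  rw [← Real.mul_rpow hD (X.norm_nonneg _ hh)]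
  exact Real.rpow_le_rpow (X.norm_nonneg _ hmem) ((X.norm_le_of_ae_abs_le hB hv').trans hBn)
    (by positivity)

/-- Here `divAbsRpow p g = sgn(g) |g|^(1-p)` and `absRpowDiv p f = sgn(f) |f|^(p-1)`. If
`S |f|^p = |g|^p` this operator sends `f` to `g`, and Hölder's inequality for the positive
operator `S` bounds its value at `h` by `(S |h|^p)^(1/p)`. -/
noncomputable def pConvLift (p : ℝ) (S : (Ω →ₘ[μ] ℝ) → Ω →ₘ[μ] ℝ) (f g : Ω →ₘ[μ] ℝ)
    (h : Ω →ₘ[μ] ℝ) : Ω →ₘ[μ] ℝ :=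
  divAbsRpow p g * S (h * absRpowDiv p f)

section PConvLift

variable {X₀ X₁ : BanachFunctionLattice Ω μ} {S : (Ω →ₘ[μ] ℝ) → Ω →ₘ[μ] ℝ} {p : ℝ}
  {f g h : Ω →ₘ[μ] ℝ}

theorem mul_absRpowDiv_mem_sumSet (hp : 1 < p) (hf : f ∈ sumSet (pConv X₀ p) (pConv X₁ p))
    (hh : h ∈ sumSet (pConv X₀ p) (pConv X₁ p)) :
    h * absRpowDiv p f ∈ sumSet X₀.toFunctionSpace X₁.toFunctionSpace := by
  have hpq := Real.HolderConjugate.conjExponent hp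
  refine mul_mem_sumSet hpq (absRpow_mem_sumSet hp.le hh) ?_
  rw [absRpow_absRpowDiv hpq]
  exact absRpow_mem_sumSet hp.le hf

theorem pConvLift_add (hS : IsBoundedCoupleOperator X₀.toFunctionSpace X₁.toFunctionSpace S)
    (hp : 1 < p) (hf : f ∈ sumSet (pConv X₀ p) (pConv X₁ p))
    (hh : h ∈ sumSet (pConv X₀ p) (pConv X₁ p)) {h' : Ω →ₘ[μ] ℝ}
    (hh' : h' ∈ sumSet (pConv X₀ p) (pConv X₁ p)) :
    pConvLift p S f g (h + h') = pConvLift p S f g h + pConvLift p S f g h' := by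
  rw [pConvLift, AEEqFun.add_mul, hS.1 _ (mul_absRpowDiv_mem_sumSet hp hf hh) _
    (mul_absRpowDiv_mem_sumSet hp hf hh'), AEEqFun.mul_add, pConvLift, pConvLift]

theorem pConvLift_smul (hS : IsBoundedCoupleOperator X₀.toFunctionSpace X₁.toFunctionSpace S)
    (hp : 1 < p) (hf : f ∈ sumSet (pConv X₀ p) (pConv X₁ p)) (c : ℝ)
    (hh : h ∈ sumSet (pConv X₀ p) (pConv X₁ p)) :
    pConvLift p S f g (c • h) = c • pConvLift p S f g h := by
  rw [pConvLift, AEEqFun.smul_mul_assoc, hS.2.1 _ _ (mul_absRpowDiv_mem_sumSet hp hf hh),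
    AEEqFun.mul_smul_comm, pConvLift]

theorem pConvLift_self (hp : p ≠ 0) (hfg : S (absRpow p f) = absRpow p g) :
    pConvLift p S f g f = g := by
  rw [pConvLift, mul_absRpowDiv hp, hfg, divAbsRpow_mul_absRpow]

theorem ae_abs_pConvLift_rpow_le
    (hS : IsBoundedCoupleOperator X₀.toFunctionSpace X₁.toFunctionSpace S)
    (hSpos : IsPositiveOn X₀.toFunctionSpace X₁.toFunctionSpace S) (hp : 1 < p)
    (hf : f ∈ sumSet (pConv X₀ p) (pConv X₁ p)) (hfg : S (absRpow p f) = absRpow p g)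
    (hh : h ∈ sumSet (pConv X₀ p) (pConv X₁ p)) :
    ∀ᵐ ω ∂μ, |pConvLift p S f g h ω| ^ p ≤ |S (absRpow p h) ω| := by
  have hpq := Real.HolderConjugate.conjExponent hp
  have hh' := absRpow_mem_sumSet hp.le hh
  have hH := hSpos.ae_abs_apply_mul_le hS hpq hh'
    ((absRpow_absRpowDiv hpq f).symm ▸ absRpow_mem_sumSet hp.le hf)
  rw [absRpow_absRpowDiv hpq, hfg] at hH
  filter_upwards [hH, AEEqFun.coeFn_mul (divAbsRpow p g) (S (h * absRpowDiv p f)),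
    coeFn_divAbsRpow p g, AEEqFun.coeFn_absRpow p g,
    hSpos.ae_nonneg hh' (ae_absRpow_nonneg p h)] with ω hH e em eg hA
  rw [eg] at hH
  rw [pConvLift, e, Pi.mul_apply, em, abs_mul, abs_of_nonneg hA]
  have hm := abs_div_abs_rpow_mul_rpow_le_one hpq (g ω)
  calc (|g ω / |g ω| ^ p| * |S (h * absRpowDiv p f) ω|) ^ p
      ≤ (|g ω / |g ω| ^ p| * (S (absRpow p h) ω ^ (1 / p) * (|g ω| ^ p) ^ (1 / p.conjExponent)))
          ^ p := by gcongr
    _ = ((|g ω / |g ω| ^ p| * (|g ω| ^ p) ^ (1 / p.conjExponent)) * S (absRpow p h) ω ^ (1 / p))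
          ^ p := by ring_nf
    _ ≤ (1 * S (absRpow p h) ω ^ (1 / p)) ^ p := by gcongr
    _ = S (absRpow p h) ω := by rw [one_mul, one_div, Real.rpow_inv_rpow hA (by linarith)]

theorem exists_pConv_operator_of_isPositiveOn {D : ℝ} (hp : 1 < p) (hD : 0 ≤ D)
    (hS : IsBoundedCoupleOperator X₀.toFunctionSpace X₁.toFunctionSpace S)
    (hSpos : IsPositiveOn X₀.toFunctionSpace X₁.toFunctionSpace S)
    (hSD : CoupleOperatorNormLE X₀.toFunctionSpace X₁.toFunctionSpace S D)
    (hf : f ∈ sumSet (pConv X₀ p) (pConv X₁ p)) (hfg : S (absRpow p f) = absRpow p g) :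
    ∃ T, IsBoundedCoupleOperator (pConv X₀ p) (pConv X₁ p) T ∧ T f = g ∧
      CoupleOperatorNormLE (pConv X₀ p) (pConv X₁ p) T (D ^ (1 / p)) := by
  have hp₀ : 0 < p := by linarith
  have h₀ : ∀ h ∈ (pConv X₀ p).carrier, pConvLift p S f g h ∈ (pConv X₀ p).carrier ∧
      (pConv X₀ p).norm (pConvLift p S f g h) ≤ D ^ (1 / p) * (pConv X₀ p).norm h :=
    fun h hh => mem_pConv_and_norm_le_of_ae_rpow_le X₀ hp₀ hD hh (hS.2.2.1 _ hh) (hSD.1 _ hh)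
      (ae_abs_pConvLift_rpow_le hS hSpos hp hf hfg
        (mem_sumSet_of_mem_left (zero_mem_pConv X₁ hp₀.ne') hh))
  have h₁ : ∀ h ∈ (pConv X₁ p).carrier, pConvLift p S f g h ∈ (pConv X₁ p).carrier ∧
      (pConv X₁ p).norm (pConvLift p S f g h) ≤ D ^ (1 / p) * (pConv X₁ p).norm h :=
    fun h hh => mem_pConv_and_norm_le_of_ae_rpow_le X₁ hp₀ hD hh (hS.2.2.2.1 _ hh) (hSD.2 _ hh)
      (ae_abs_pConvLift_rpow_le hS hSpos hp hf hfg
        (mem_sumSet_of_mem_right (zero_mem_pConv X₀ hp₀.ne') hh))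
  refine ⟨pConvLift p S f g, ⟨fun h hh h' hh' => pConvLift_add hS hp hf hh hh',
    fun c h hh => pConvLift_smul hS hp hf c hh, fun h hh => (h₀ h hh).1, fun h hh => (h₁ h hh).1,
    ⟨_, fun h hh => (h₀ h hh).2⟩, ⟨_, fun h hh => (h₁ h hh).2⟩⟩, pConvLift_self hp₀.ne' hfg,
    fun h hh => (h₀ h hh).2, fun h hh => (h₁ h hh).2⟩

end PConvLift

theorem pConv_isCCalderonCouple_general
    (X₀ X₁ : BanachFunctionLattice Ω μ) (C : ℝ) (hC : 0 < C)
    (hpos : IsPositiveCCalderonCouple X₀.toFunctionSpace X₁.toFunctionSpace C)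
    (p : ℝ) (hp : 1 < p) :
    IsCCalderonCouple (pConv X₀ p) (pConv X₁ p) (2 ^ (1 - 1 / p) * C ^ (1 / p)) := by
  intro f hf g hg hK
  have hf' := absRpow_mem_sumSet hp.le hf
  have hKX : ∀ t > 0, Kfun X₀.toFunctionSpace X₁.toFunctionSpace t (absRpow p g)
      ≤ Kfun X₀.toFunctionSpace X₁.toFunctionSpace t ((2 : ℝ) ^ (p - 1) • absRpow p f) :=
    fun t ht => calc
      _ ≤ Kfun (pConv X₀ p) (pConv X₁ p) (t ^ (1 / p)) g ^ p :=
          Kfun_absRpow_le_Kfun_pConv_rpow hp.le ht hg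
      _ ≤ Kfun (pConv X₀ p) (pConv X₁ p) (t ^ (1 / p)) f ^ p := by
          gcongr
          · exact Kfun_nonneg (pConv_norm_nonneg X₀ p) (pConv_norm_nonneg X₁ p) (by positivity)
          · exact hK _ (by positivity)
      _ ≤ 2 ^ (p - 1) * Kfun X₀.toFunctionSpace X₁.toFunctionSpace t (absRpow p f) :=
          Kfun_pConv_rpow_le_Kfun_absRpow hp.le ht hf
      _ ≤ _ := mul_Kfun_le_Kfun_smul (by positivity) ht.le hf'
  obtain ⟨S, hS, hSpos, hSfg, hSC⟩ := hpos _ (smul_mem_sumSet _ hf') _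
    (absRpow_mem_sumSet hp.le hg)
    (AEEqFun.smul_nonneg (by positivity) (AEEqFun.nonneg_iff.2 (ae_absRpow_nonneg p f)))
    (AEEqFun.nonneg_iff.2 (ae_absRpow_nonneg p g)) hKX
  obtain ⟨T, hT, hTfg, hTC⟩ := exists_pConv_operator_of_isPositiveOn hp (by positivity)
    (hS.comp_smul _) (hSpos.comp_smul (by positivity)) (hSC.comp_smul _) hf hSfg
  refine ⟨T, hT, hTfg, ?_⟩
  rwa [abs_of_pos (by positivity), Real.mul_rpow (by positivity) hC.le,
    ← Real.rpow_mul zero_le_two, sub_mul, one_mul, mul_one_div_cancel (by positivity)] at hTC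

/-- If `(X₀, X₁)` is a positive `C`-Calderón couple of Banach lattices of
measurable functions on a common measure space, and `X₀` and `X₁` are complete lattices,
then for every `p ∈ (1, ∞)` the couple of `p`-convexifications `(X₀^(p), X₁^(p))` is a
`2^(1-1/p) C^(1/p)`-Calderón couple. -/
theorem pConv_isCCalderonCouple
    (X₀ X₁ : BanachFunctionLattice Ω μ) (C : ℝ) (hC : 0 < C)
    (hpos : IsPositiveCCalderonCouple X₀.toFunctionSpace X₁.toFunctionSpace C)
    (h₀ : HasLUBP X₀.carrier) (h₁ : HasLUBP X₁.carrier)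
    (p : ℝ) (hp : 1 < p) :
    IsCCalderonCouple (pConv X₀ p) (pConv X₁ p) (2 ^ (1 - 1 / p) * C ^ (1 / p)) :=
  pConv_isCCalderonCouple_general X₀ X₁ C hC hpos p hp
end

section
/- Let X₀ and X₁ be Banach lattices of measurable functions on a common measure space, let 1 < p < ∞, and let f ∈ X₀^(p)+X₁^(p). Then for every t > 0, (D(t,|f|^p;X₀,X₁))^{1/p} ≤ D(t^{1/p},f;X₀^(p),X₁^(p)) ≤ 2^{1−1/p}·(D(t,|f|^p;X₀,X₁))^{1/p}. -/
open MeasureTheory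

variable {Ω : Type*} [MeasurableSpace Ω] {μ : MeasureTheory.Measure Ω}

lemma aux_pow_add {x y p : ℝ} (hx : 0 ≤ x) (hy : 0 ≤ y) (hp : 1 ≤ p) :
    x ^ p + y ^ p ≤ (x + y) ^ p := by
  have h := NNReal.add_rpow_le_rpow_add x.toNNReal y.toNNReal hp
  have h2 := NNReal.coe_le_coe.2 h
  push_cast [NNReal.coe_rpow, Real.coe_toNNReal x hx, Real.coe_toNNReal y hy] at h2
  exact h2

lemma aux_concave {u v q : ℝ} (hu : 0 ≤ u) (hv : 0 ≤ v) (hq0 : 0 < q) (hq1 : q ≤ 1) :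
    u ^ q + v ^ q ≤ 2 ^ (1 - q) * (u + v) ^ q := by
  have hp : 1 ≤ 1 / q := by rw [le_div_iff₀ hq0]; simpa using hq1
  have key : ∀ a b : NNReal, a ^ q + b ^ q ≤ 2 ^ (1 - q) * (a + b) ^ q := by
    intro a b
    have h := NNReal.rpow_add_le_mul_rpow_add_rpow (a ^ q) (b ^ q) hp
    have h2 := NNReal.rpow_le_rpow h hq0.le
    rw [← NNReal.rpow_mul, ← NNReal.rpow_mul, ← NNReal.rpow_mul,
      one_div_mul_cancel hq0.ne', NNReal.rpow_one,
      mul_one_div_cancel hq0.ne', NNReal.rpow_one, NNReal.rpow_one,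
      NNReal.mul_rpow, ← NNReal.rpow_mul] at h2
    have he : (1 / q - 1) * q = 1 - q := by field_simp
    rwa [he] at h2
  have h := NNReal.coe_le_coe.2 (key u.toNNReal v.toNNReal)
  push_cast [NNReal.coe_rpow, Real.coe_toNNReal u hu, Real.coe_toNNReal v hv] at h
  exact h

lemma absRpow_coeFn (p : ℝ) (f : Ω →ₘ[μ] ℝ) :
    ⇑(absRpow p f) =ᵐ[μ] fun ω => |f ω| ^ p :=
  AEEqFun.coeFn_mk _ _

lemma abs_le_of_ae {g b : Ω →ₘ[μ] ℝ} (h : ∀ᵐ ω ∂μ, |g ω| ≤ |b ω|) : |g| ≤ |b| := by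
  rw [← AEEqFun.coeFn_le]
  filter_upwards [AEEqFun.coeFn_abs g, AEEqFun.coeFn_abs b, h] with ω h1 h2 h3
  rw [h1, h2]; exact h3

lemma coeFn_mul_eq_zero {a₀ a₁ : Ω →ₘ[μ] ℝ} (hd : a₀ * a₁ = 0) :
    ∀ᵐ ω ∂μ, a₀ ω * a₁ ω = 0 := by
  have h0 : ⇑(a₀ * a₁) =ᵐ[μ] (0 : Ω → ℝ) := by rw [hd]; exact AEEqFun.coeFn_zero
  filter_upwards [AEEqFun.coeFn_mul a₀ a₁, h0] with ω h1 h2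
  simpa using h1.symm.trans h2

lemma cut_decomp (f : Ω →ₘ[μ] ℝ) {s : Set Ω} (hs : MeasurableSet s) :
    ∃ a₀ a₁ : Ω →ₘ[μ] ℝ,
      f = a₀ + a₁ ∧ a₀ * a₁ = 0 ∧
      (⇑a₀ =ᵐ[μ] s.indicator ⇑f) ∧ (⇑a₁ =ᵐ[μ] sᶜ.indicator ⇑f) := by
  have h0 : AEStronglyMeasurable (s.indicator ⇑f) μ :=
    (f.measurable.indicator hs).aestronglyMeasurable
  have h1 : AEStronglyMeasurable (sᶜ.indicator ⇑f) μ :=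
    (f.measurable.indicator hs.compl).aestronglyMeasurable
  refine ⟨AEEqFun.mk _ h0, AEEqFun.mk _ h1, ?_, ?_,
    AEEqFun.coeFn_mk _ _, AEEqFun.coeFn_mk _ _⟩
  · apply AEEqFun.ext
    filter_upwards [AEEqFun.coeFn_add (AEEqFun.mk _ h0) (AEEqFun.mk _ h1),
      AEEqFun.coeFn_mk _ h0, AEEqFun.coeFn_mk _ h1] with ω hadd ha hb
    rw [hadd, Pi.add_apply, ha, hb]
    by_cases hω : ω ∈ s <;> simp [Set.indicator_apply, hω]
  · apply AEEqFun.ext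
    filter_upwards [AEEqFun.coeFn_mul (AEEqFun.mk _ h0) (AEEqFun.mk _ h1),
      AEEqFun.coeFn_mk _ h0, AEEqFun.coeFn_mk _ h1,
      AEEqFun.coeFn_zero (β := ℝ) (μ := μ)] with ω hmul ha hb hz
    rw [hmul, Pi.mul_apply, ha, hb, hz]
    by_cases hω : ω ∈ s <;> simp [Set.indicator_apply, hω]

lemma absRpow_add_of_disjoint {p : ℝ} (hp : 0 < p) {a₀ a₁ : Ω →ₘ[μ] ℝ}
    (hd : a₀ * a₁ = 0) :
    absRpow p (a₀ + a₁) = absRpow p a₀ + absRpow p a₁ ∧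
    (absRpow p a₀) * (absRpow p a₁) = 0 := by
  have hmul := coeFn_mul_eq_zero hd
  constructor
  · apply AEEqFun.ext
    filter_upwards [absRpow_coeFn p (a₀ + a₁), AEEqFun.coeFn_add a₀ a₁,
      AEEqFun.coeFn_add (absRpow p a₀) (absRpow p a₁), absRpow_coeFn p a₀,
      absRpow_coeFn p a₁, hmul] with ω h1 h2 h3 h4 h5 h6
    rw [h1, h2, Pi.add_apply, h3, Pi.add_apply, h4, h5]
    rcases mul_eq_zero.mp h6 with h | h <;>
      simp [h, abs_zero, Real.zero_rpow hp.ne']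
  · apply AEEqFun.ext
    filter_upwards [AEEqFun.coeFn_mul (absRpow p a₀) (absRpow p a₁),
      absRpow_coeFn p a₀, absRpow_coeFn p a₁, hmul,
      AEEqFun.coeFn_zero (β := ℝ) (μ := μ)] with ω h1 h2 h3 h4 hz
    rw [h1, Pi.mul_apply, h2, h3, hz]
    rcases mul_eq_zero.mp h4 with h | h <;>
      simp [h, abs_zero, Real.zero_rpow hp.ne']

/-- For `1 < p < ∞`, `f ∈ X₀^(p) + X₁^(p)` and `t > 0`,
`D(t, |f|^p; X₀, X₁)^(1/p) ≤ D(t^(1/p), f; X₀^(p), X₁^(p)) ≤ 2^(1-1/p) D(t, |f|^p; X₀, X₁)^(1/p)`. -/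
theorem Dfun_pConv_equiv
    (X₀ X₁ : BanachFunctionLattice Ω μ) (p : ℝ) (hp : 1 < p)
    (f : Ω →ₘ[μ] ℝ) (hf : f ∈ sumSet (pConv X₀ p) (pConv X₁ p))
    (t : ℝ) (ht : 0 < t) :
    (Dfun X₀.toFunctionSpace X₁.toFunctionSpace t (absRpow p f)) ^ (1 / p)
        ≤ Dfun (pConv X₀ p) (pConv X₁ p) (t ^ (1 / p)) f ∧
      Dfun (pConv X₀ p) (pConv X₁ p) (t ^ (1 / p)) f
        ≤ 2 ^ (1 - 1 / p) *
          (Dfun X₀.toFunctionSpace X₁.toFunctionSpace t (absRpow p f)) ^ (1 / p) := by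
  have hp0 : 0 < p := lt_trans one_pos hp
  have hq0 : 0 < 1 / p := by positivity
  have hq1 : 1 / p ≤ 1 := by rw [div_le_one hp0]; exact hp.le
  set F := absRpow p f with hF
  set S₀ : Set ℝ := {r | ∃ b₀ ∈ X₀.toFunctionSpace.carrier, ∃ b₁ ∈ X₁.toFunctionSpace.carrier,
    F = b₀ + b₁ ∧ b₀ * b₁ = 0 ∧
      r = X₀.toFunctionSpace.norm b₀ + t * X₁.toFunctionSpace.norm b₁} with hS₀
  set S₁ : Set ℝ := {r | ∃ a₀ ∈ (pConv X₀ p).carrier, ∃ a₁ ∈ (pConv X₁ p).carrier,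
    f = a₀ + a₁ ∧ a₀ * a₁ = 0 ∧
      r = (pConv X₀ p).norm a₀ + t ^ (1 / p) * (pConv X₁ p).norm a₁} with hS₁
  have hD0 : Dfun X₀.toFunctionSpace X₁.toFunctionSpace t F = sInf S₀ := by rw [hS₀]; rfl
  have hD1 : Dfun (pConv X₀ p) (pConv X₁ p) (t ^ (1 / p)) f = sInf S₁ := by rw [hS₁]; rfl
  have hS₀nonneg : ∀ r ∈ S₀, 0 ≤ r := by
    rintro r ⟨b₀, hb₀, b₁, hb₁, -, -, rfl⟩
    exact add_nonneg (X₀.norm_nonneg _ hb₀) (mul_nonneg ht.le (X₁.norm_nonneg _ hb₁))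
  have hS₁nonneg : ∀ r ∈ S₁, 0 ≤ r := by
    rintro r ⟨a₀, ha₀, a₁, ha₁, -, -, rfl⟩
    have ha₀' : absRpow p a₀ ∈ X₀.carrier := ha₀
    have ha₁' : absRpow p a₁ ∈ X₁.carrier := ha₁
    exact add_nonneg (Real.rpow_nonneg (X₀.norm_nonneg _ ha₀') _)
      (mul_nonneg (Real.rpow_nonneg ht.le _) (Real.rpow_nonneg (X₁.norm_nonneg _ ha₁') _))
  -- map from S₁ to S₀
  have hmap01 : ∀ r ∈ S₁, ∃ s ∈ S₀, s ≤ r ^ p := by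
    rintro r ⟨a₀, ha₀, a₁, ha₁, hsum, hdisj, rfl⟩
    obtain ⟨hadd, hdis⟩ := absRpow_add_of_disjoint hp0 hdisj
    have hFeq : F = absRpow p a₀ + absRpow p a₁ := by rw [hF, hsum]; exact hadd
    have ha₀' : absRpow p a₀ ∈ X₀.carrier := ha₀
    have ha₁' : absRpow p a₁ ∈ X₁.carrier := ha₁
    refine ⟨X₀.norm (absRpow p a₀) + t * X₁.norm (absRpow p a₁),
      ⟨absRpow p a₀, ha₀', absRpow p a₁, ha₁', hFeq, hdis, rfl⟩, ?_⟩
    have hN₀ : 0 ≤ X₀.norm (absRpow p a₀) := X₀.norm_nonneg _ ha₀'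
    have hN₁ : 0 ≤ X₁.norm (absRpow p a₁) := X₁.norm_nonneg _ ha₁'
    have hA : ((X₀.norm (absRpow p a₀)) ^ (1 / p)) ^ p = X₀.norm (absRpow p a₀) := by
      rw [← Real.rpow_mul hN₀, one_div_mul_cancel hp0.ne', Real.rpow_one]
    have hB : (t ^ (1 / p) * (X₁.norm (absRpow p a₁)) ^ (1 / p)) ^ p
        = t * X₁.norm (absRpow p a₁) := by
      rw [← Real.mul_rpow ht.le hN₁, ← Real.rpow_mul (mul_nonneg ht.le hN₁),
        one_div_mul_cancel hp0.ne', Real.rpow_one]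
    show X₀.norm (absRpow p a₀) + t * X₁.norm (absRpow p a₁)
        ≤ ((X₀.norm (absRpow p a₀)) ^ (1 / p)
            + t ^ (1 / p) * (X₁.norm (absRpow p a₁)) ^ (1 / p)) ^ p
    calc X₀.norm (absRpow p a₀) + t * X₁.norm (absRpow p a₁)
        = ((X₀.norm (absRpow p a₀)) ^ (1 / p)) ^ p
          + (t ^ (1 / p) * (X₁.norm (absRpow p a₁)) ^ (1 / p)) ^ p := by rw [hA, hB]
      _ ≤ ((X₀.norm (absRpow p a₀)) ^ (1 / p)
          + t ^ (1 / p) * (X₁.norm (absRpow p a₁)) ^ (1 / p)) ^ p :=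
          aux_pow_add (Real.rpow_nonneg hN₀ _)
            (mul_nonneg (Real.rpow_nonneg ht.le _) (Real.rpow_nonneg hN₁ _)) hp.le
  -- map from S₀ to S₁
  have hmap10 : ∀ s ∈ S₀, ∃ r ∈ S₁, r ≤ 2 ^ (1 - 1 / p) * s ^ (1 / p) := by
    rintro s ⟨b₀, hb₀, b₁, hb₁, hsum, hdisj, rfl⟩
    have hFae : (fun ω => |f ω| ^ p) =ᵐ[μ] fun ω => b₀ ω + b₁ ω := by
      have h2 : ⇑F =ᵐ[μ] ⇑(b₀ + b₁) := by rw [hsum]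
      filter_upwards [absRpow_coeFn p f, h2, AEEqFun.coeFn_add b₀ b₁] with ω h1 h2' h3
      rw [← h1, h2', h3]; rfl
    have hbmul := coeFn_mul_eq_zero hdisj
    have hms : MeasurableSet {ω | b₁ ω = (0 : ℝ)} :=
      measurableSet_eq_fun b₁.measurable measurable_const
    obtain ⟨a₀, a₁, hfsum, hfd, ha₀e, ha₁e⟩ := cut_decomp f hms
    have habs₀ : |absRpow p a₀| ≤ |b₀| := by
      apply abs_le_of_ae
      filter_upwards [absRpow_coeFn p a₀, ha₀e, hFae, hbmul] with ω h1 h2 h3 h4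
      rw [h1, h2]
      by_cases hω : b₁ ω = 0
      · have hind : ({ω | ⇑b₁ ω = 0}).indicator (⇑f) ω = f ω := by
          simp [Set.indicator_apply, Set.mem_setOf_eq, hω]
        rw [hind, abs_of_nonneg (Real.rpow_nonneg (abs_nonneg _) _), h3, hω, add_zero]
        exact le_abs_self _
      · have hind : ({ω | ⇑b₁ ω = 0}).indicator (⇑f) ω = 0 := by
          simp [Set.indicator_apply, Set.mem_setOf_eq, hω]
        rw [hind]
        simp [abs_zero, Real.zero_rpow hp0.ne', abs_nonneg]
    have habs₁ : |absRpow p a₁| ≤ |b₁| := by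
      apply abs_le_of_ae
      filter_upwards [absRpow_coeFn p a₁, ha₁e, hFae, hbmul] with ω h1 h2 h3 h4
      rw [h1, h2]
      by_cases hω : b₁ ω = 0
      · have hind : ({ω | ⇑b₁ ω = 0}ᶜ).indicator (⇑f) ω = 0 := by
          simp [Set.indicator_apply, Set.mem_compl_iff, Set.mem_setOf_eq, hω]
        rw [hind]
        simp [abs_zero, Real.zero_rpow hp0.ne', abs_nonneg]
      · have hind : ({ω | ⇑b₁ ω = 0}ᶜ).indicator (⇑f) ω = f ω := by
          simp [Set.indicator_apply, Set.mem_compl_iff, Set.mem_setOf_eq, hω]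
        rw [hind]
        have hb₀ω : b₀ ω = 0 := by
          rcases mul_eq_zero.mp h4 with h | h
          · exact h
          · exact absurd h hω
        rw [abs_of_nonneg (Real.rpow_nonneg (abs_nonneg _) _), h3, hb₀ω, zero_add]
        exact le_abs_self _
    have mem₀ : absRpow p a₀ ∈ X₀.carrier := X₀.ideal_mem b₀ hb₀ _ habs₀
    have mem₁ : absRpow p a₁ ∈ X₁.carrier := X₁.ideal_mem b₁ hb₁ _ habs₁
    have hn₀ : X₀.norm (absRpow p a₀) ≤ X₀.norm b₀ := X₀.ideal_norm_le b₀ hb₀ _ habs₀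
    have hn₁ : X₁.norm (absRpow p a₁) ≤ X₁.norm b₁ := X₁.ideal_norm_le b₁ hb₁ _ habs₁
    refine ⟨(X₀.norm (absRpow p a₀)) ^ (1 / p)
        + t ^ (1 / p) * (X₁.norm (absRpow p a₁)) ^ (1 / p),
      ⟨a₀, mem₀, a₁, mem₁, hfsum, hfd, rfl⟩, ?_⟩
    have h₀le : (X₀.norm (absRpow p a₀)) ^ (1 / p) ≤ (X₀.norm b₀) ^ (1 / p) :=
      Real.rpow_le_rpow (X₀.norm_nonneg _ mem₀) hn₀ hq0.le
    have h₁le : (X₁.norm (absRpow p a₁)) ^ (1 / p) ≤ (X₁.norm b₁) ^ (1 / p) :=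
      Real.rpow_le_rpow (X₁.norm_nonneg _ mem₁) hn₁ hq0.le
    calc (X₀.norm (absRpow p a₀)) ^ (1 / p)
          + t ^ (1 / p) * (X₁.norm (absRpow p a₁)) ^ (1 / p)
        ≤ (X₀.norm b₀) ^ (1 / p) + t ^ (1 / p) * (X₁.norm b₁) ^ (1 / p) :=
          add_le_add h₀le (mul_le_mul_of_nonneg_left h₁le (Real.rpow_nonneg ht.le _))
      _ = (X₀.norm b₀) ^ (1 / p) + (t * X₁.norm b₁) ^ (1 / p) := by
          rw [Real.mul_rpow ht.le (X₁.norm_nonneg _ hb₁)]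
      _ ≤ 2 ^ (1 - 1 / p) * (X₀.norm b₀ + t * X₁.norm b₁) ^ (1 / p) :=
          aux_concave (X₀.norm_nonneg _ hb₀)
            (mul_nonneg ht.le (X₁.norm_nonneg _ hb₁)) hq0 hq1
  -- S₁ is nonempty
  have hS₁ne : S₁.Nonempty := by
    obtain ⟨c₀, hc₀, c₁, hc₁, hfc⟩ := hf
    have hc₀' : absRpow p c₀ ∈ X₀.carrier := hc₀
    have hc₁' : absRpow p c₁ ∈ X₁.carrier := hc₁
    have hms : MeasurableSet {ω | |c₁ ω| ≤ |c₀ ω|} :=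
      measurableSet_le c₁.measurable.abs c₀.measurable.abs
    obtain ⟨a₀, a₁, hfsum, hfd, ha₀e, ha₁e⟩ := cut_decomp f hms
    have hfe : ⇑f =ᵐ[μ] fun ω => c₀ ω + c₁ ω := by
      have h2 : ⇑f =ᵐ[μ] ⇑(c₀ + c₁) := by rw [hfc]
      filter_upwards [h2, AEEqFun.coeFn_add c₀ c₁] with ω h2' h3
      rw [h2', h3]; rfl
    have habs₀ : |absRpow p a₀| ≤ |((2 : ℝ) ^ p) • absRpow p c₀| := by
      apply abs_le_of_ae
      filter_upwards [absRpow_coeFn p a₀, ha₀e, hfe,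
        AEEqFun.coeFn_smul ((2 : ℝ) ^ p) (absRpow p c₀), absRpow_coeFn p c₀]
        with ω h1 h2 h3 h4 h5
      have h4' : (((2 : ℝ) ^ p) • absRpow p c₀) ω = (2 : ℝ) ^ p * |c₀ ω| ^ p := by
        rw [h4]; simp [h5]
      rw [h1, h2, h4', abs_of_nonneg (by positivity : (0:ℝ) ≤ (2:ℝ) ^ p * |c₀ ω| ^ p)]
      by_cases hω : |c₁ ω| ≤ |c₀ ω|
      · have hind : ({ω | |⇑c₁ ω| ≤ |⇑c₀ ω|}).indicator (⇑f) ω = f ω := by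
          simp [Set.indicator_apply, Set.mem_setOf_eq, hω]
        rw [hind, abs_of_nonneg (Real.rpow_nonneg (abs_nonneg _) _)]
        calc |f ω| ^ p ≤ (2 * |c₀ ω|) ^ p := by
              apply Real.rpow_le_rpow (abs_nonneg _) _ hp0.le
              calc |f ω| = |c₀ ω + c₁ ω| := by rw [h3]
                _ ≤ |c₀ ω| + |c₁ ω| := abs_add_le _ _
                _ ≤ 2 * |c₀ ω| := by linarith
          _ = 2 ^ p * |c₀ ω| ^ p := Real.mul_rpow (by norm_num) (abs_nonneg _)
      · have hind : ({ω | |⇑c₁ ω| ≤ |⇑c₀ ω|}).indicator (⇑f) ω = 0 := by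
          simp [Set.indicator_apply, Set.mem_setOf_eq, hω]
        rw [hind]
        simp [abs_zero, Real.zero_rpow hp0.ne']
        positivity
    have habs₁ : |absRpow p a₁| ≤ |((2 : ℝ) ^ p) • absRpow p c₁| := by
      apply abs_le_of_ae
      filter_upwards [absRpow_coeFn p a₁, ha₁e, hfe,
        AEEqFun.coeFn_smul ((2 : ℝ) ^ p) (absRpow p c₁), absRpow_coeFn p c₁]
        with ω h1 h2 h3 h4 h5
      have h4' : (((2 : ℝ) ^ p) • absRpow p c₁) ω = (2 : ℝ) ^ p * |c₁ ω| ^ p := by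
        rw [h4]; simp [h5]
      rw [h1, h2, h4', abs_of_nonneg (by positivity : (0:ℝ) ≤ (2:ℝ) ^ p * |c₁ ω| ^ p)]
      by_cases hω : |c₁ ω| ≤ |c₀ ω|
      · have hind : ({ω | |⇑c₁ ω| ≤ |⇑c₀ ω|}ᶜ).indicator (⇑f) ω = 0 := by
          simp [Set.indicator_apply, Set.mem_compl_iff, Set.mem_setOf_eq, hω]
        rw [hind]
        simp [abs_zero, Real.zero_rpow hp0.ne']
        positivity
      · have hind : ({ω | |⇑c₁ ω| ≤ |⇑c₀ ω|}ᶜ).indicator (⇑f) ω = f ω := by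
          simp [Set.indicator_apply, Set.mem_compl_iff, Set.mem_setOf_eq, hω]
        rw [hind]
        push_neg at hω
        rw [abs_of_nonneg (Real.rpow_nonneg (abs_nonneg _) _)]
        calc |f ω| ^ p ≤ (2 * |c₁ ω|) ^ p := by
              apply Real.rpow_le_rpow (abs_nonneg _) _ hp0.le
              calc |f ω| = |c₀ ω + c₁ ω| := by rw [h3]
                _ ≤ |c₀ ω| + |c₁ ω| := abs_add_le _ _
                _ ≤ 2 * |c₁ ω| := by linarith
          _ = 2 ^ p * |c₁ ω| ^ p := Real.mul_rpow (by norm_num) (abs_nonneg _)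
    have mem₀ : absRpow p a₀ ∈ X₀.carrier :=
      X₀.ideal_mem _ (X₀.smul_mem _ hc₀') _ habs₀
    have mem₁ : absRpow p a₁ ∈ X₁.carrier :=
      X₁.ideal_mem _ (X₁.smul_mem _ hc₁') _ habs₁
    exact ⟨_, a₀, mem₀, a₁, mem₁, hfsum, hfd, rfl⟩
  have hS₀ne : S₀.Nonempty := by
    obtain ⟨r, hr⟩ := hS₁ne
    obtain ⟨s, hs, -⟩ := hmap01 r hr
    exact ⟨s, hs⟩
  have hbdd₀ : BddBelow S₀ := ⟨0, fun x hx => hS₀nonneg x hx⟩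
  have hbdd₁ : BddBelow S₁ := ⟨0, fun x hx => hS₁nonneg x hx⟩
  have hm0 : 0 ≤ sInf S₀ := le_csInf hS₀ne hS₀nonneg
  constructor
  · rw [hD0, hD1]
    apply le_csInf hS₁ne
    intro r hr
    obtain ⟨s, hs, hsr⟩ := hmap01 r hr
    have h1 : sInf S₀ ≤ r ^ p := le_trans (csInf_le hbdd₀ hs) hsr
    have hrnn : 0 ≤ r := hS₁nonneg r hr
    calc sInf S₀ ^ (1 / p) ≤ (r ^ p) ^ (1 / p) :=
          Real.rpow_le_rpow hm0 h1 hq0.le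
      _ = r := by
          rw [← Real.rpow_mul hrnn, mul_one_div_cancel hp0.ne', Real.rpow_one]
  · rw [hD0, hD1]
    have key : ∀ ε > 0, sInf S₁ ≤ 2 ^ (1 - 1 / p) * (sInf S₀ + ε) ^ (1 / p) := by
      intro ε hε
      obtain ⟨s, hs, hslt⟩ := exists_lt_of_csInf_lt hS₀ne (lt_add_of_pos_right _ hε)
      obtain ⟨r, hr, hrle⟩ := hmap10 s hs
      have h1 : sInf S₁ ≤ r := csInf_le hbdd₁ hr
      have h2 : s ^ (1 / p) ≤ (sInf S₀ + ε) ^ (1 / p) :=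
        Real.rpow_le_rpow (hS₀nonneg s hs) hslt.le hq0.le
      calc sInf S₁ ≤ r := h1
        _ ≤ 2 ^ (1 - 1 / p) * s ^ (1 / p) := hrle
        _ ≤ 2 ^ (1 - 1 / p) * (sInf S₀ + ε) ^ (1 / p) :=
            mul_le_mul_of_nonneg_left h2 (by positivity)
    have hcont : Filter.Tendsto (fun ε : ℝ => 2 ^ (1 - 1 / p) * (sInf S₀ + ε) ^ (1 / p))
        (nhdsWithin 0 (Set.Ioi 0)) (nhds (2 ^ (1 - 1 / p) * (sInf S₀) ^ (1 / p))) := by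
      have h1 : Filter.Tendsto (fun ε : ℝ => sInf S₀ + ε)
          (nhdsWithin 0 (Set.Ioi 0)) (nhds (sInf S₀)) := by
        have h : Filter.Tendsto (fun ε : ℝ => sInf S₀ + ε) (nhds 0) (nhds (sInf S₀ + 0)) :=
          tendsto_const_nhds.add Filter.tendsto_id
        rw [add_zero] at h
        exact h.mono_left nhdsWithin_le_nhds
      have h2 : ContinuousAt (fun x : ℝ => 2 ^ (1 - 1 / p) * x ^ (1 / p)) (sInf S₀) :=
        continuousAt_const.mul (Real.continuousAt_rpow_const _ _ (Or.inr hq0.le))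
      exact h2.tendsto.comp h1
    refine ge_of_tendsto hcont ?_
    filter_upwards [self_mem_nhdsWithin] with ε hε
    exact key ε hε
end
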